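/- arXiv:2507.16265 — 10 statements merged into one kernel-verified Lean document; each statement's English description precedes it below -/
import Mathlib

section
/- Let X_1, …, X_n (n ≥ 2) be random variables on a probability space, let θ = (θ_1, …, θ_n) be a weight vector in the open probability simplex Δ_n, and let I = (I_1, …, I_n) be a random vector, independent of (X_1, …, X_n), taking values in the standard basis vectors of ℝ^n with P(I_i = 1) = θ_i for each i. Then the diversified portfolio is smaller than the concentrated portfolio in convex order: for every convex function c : ℝ → ℝ such that both c(θ_1 X_1 + ⋯ + θ_n X_n) and c(I_1 X_1 + ⋯ + I_n X_n) are integrable, E[c(θ_1 X_1 + ⋯ + θ_n X_n)] ≤ E[c(I_1 X_1 + ⋯ + I_n X_n)]. -/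
/-!
Jensen's inequality, applied pointwise, bounds `c (∑ θᵢ Xᵢ)` by `∑ θᵢ c(Xᵢ)`, whose expectation is
`∑ θᵢ E[c(Xᵢ)]`. Since `I` is a standard basis vector, `c (∑ Iᵢ Xᵢ) = ∑ Iᵢ c(Xᵢ)`, and independence
of `I` from `X` gives `E[Iᵢ c(Xᵢ)] = θᵢ E[c(Xᵢ)]`, so `E[c (∑ Iᵢ Xᵢ)] = ∑ θᵢ E[c(Xᵢ)]` as well.
The same independence, together with `θᵢ > 0`, transfers integrability of `c (∑ Iᵢ Xᵢ)` to each `c(Xᵢ)`.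
-/

open MeasureTheory ProbabilityTheory

section IsBasisVector

variable {ι : Type*}

def IsBasisVector (v : ι → ℝ) : Prop :=
  ∃ i, v i = 1 ∧ ∀ j, j ≠ i → v j = 0

namespace IsBasisVector

variable {v : ι → ℝ} {i j : ι}

lemma eq_zero_of_ne_one (hv : IsBasisVector v) (hj : v j ≠ 1) : v j = 0 := by
  obtain ⟨k, hk, h0⟩ := hv
  exact h0 j (by rintro rfl; exact hj hk)

lemma eq_zero_of_ne (hv : IsBasisVector v) (hi : v i = 1) (hji : j ≠ i) : v j = 0 := by
  obtain ⟨k, -, h0⟩ := hv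
  obtain rfl : i = k := by
    by_contra hik
    simp [h0 i hik] at hi
  exact h0 j hji

variable [Fintype ι]

lemma sum_mul_eq (hv : IsBasisVector v) (hi : v i = 1) (x : ι → ℝ) :
    ∑ j, v j * x j = x i := by
  rw [Finset.sum_eq_single i (fun j _ hji => by rw [hv.eq_zero_of_ne hi hji, zero_mul])
    (by simp), hi, one_mul]

lemma apply_sum_mul (hv : IsBasisVector v) (c : ℝ → ℝ) (x : ι → ℝ) :
    c (∑ j, v j * x j) = ∑ j, v j * c (x j) := by
  obtain ⟨i, hi, -⟩ := id hv
  rw [hv.sum_mul_eq hi, hv.sum_mul_eq hi]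

lemma mul_apply_eq_ite (hv : IsBasisVector v) (c : ℝ → ℝ) (x : ι → ℝ) (j : ι) :
    v j * c (x j) = if v j = 1 then c (∑ k, v k * x k) else 0 := by
  split_ifs with hj
  · rw [hj, one_mul, hv.sum_mul_eq hj]
  · rw [hv.eq_zero_of_ne_one hj, zero_mul]

end IsBasisVector

end IsBasisVector

section Probability

variable {Ω : Type*} [MeasurableSpace Ω] {μ : Measure Ω}

lemma integral_eq_measureReal_of_eq_zero_of_ne_one {f : Ω → ℝ} (hf : Measurable f)
    (h01 : ∀ ω, f ω ≠ 1 → f ω = 0) : ∫ ω, f ω ∂μ = μ.real {ω | f ω = 1} := by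
  have hf_eq : f = {ω | f ω = 1}.indicator 1 := by
    funext ω
    by_cases h : f ω = 1 <;> simp [h, h01]
  conv_lhs => rw [hf_eq]
  exact integral_indicator_one (hf (measurableSet_singleton 1))

lemma ProbabilityTheory.IndepFun.integrable_right_of_integral_ne_zero {f g : Ω → ℝ}
    (hfg : IndepFun f g μ) (hf0 : ∫ ω, f ω ∂μ ≠ 0) (hg : AEStronglyMeasurable g μ)
    (hfgi : Integrable (fun ω => f ω * g ω) μ) : Integrable g μ :=
  hfg.integrable_right_of_integrable_op (· * ·) 1 one_ne_zero
    (fun x y => by rw [ENNReal.coe_one, one_mul, enorm_mul]) hfgi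
    (Integrable.of_integral_ne_zero hf0).aestronglyMeasurable hg
    (fun h => hf0 (by rw [integral_congr_ae h]; simp))

lemma ConvexOn.integral_comp_sum_mul_le {ι : Type*} [Fintype ι] {c : ℝ → ℝ}
    (hc : ConvexOn ℝ Set.univ c) {θ : ι → ℝ} (hθ0 : ∀ i, 0 ≤ θ i) (hθ1 : ∑ i, θ i = 1)
    {X : ι → Ω → ℝ} (hint : Integrable (fun ω => c (∑ i, θ i * X i ω)) μ)
    (hintX : ∀ i, Integrable (fun ω => c (X i ω)) μ) :
    ∫ ω, c (∑ i, θ i * X i ω) ∂μ ≤ ∑ i, θ i * ∫ ω, c (X i ω) ∂μ := by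
  have hjensen (ω : Ω) : c (∑ i, θ i * X i ω) ≤ ∑ i, θ i * c (X i ω) := by
    simpa only [smul_eq_mul] using
      hc.map_sum_le (fun i _ => hθ0 i) hθ1 (fun i _ => Set.mem_univ (X i ω))
  calc ∫ ω, c (∑ i, θ i * X i ω) ∂μ
      ≤ ∫ ω, ∑ i, θ i * c (X i ω) ∂μ :=
        integral_mono hint (integrable_finsetSum _ fun i _ => (hintX i).const_mul _) hjensen
    _ = ∑ i, θ i * ∫ ω, c (X i ω) ∂μ := by
        rw [integral_finsetSum _ fun i _ => (hintX i).const_mul _]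
        simp only [integral_const_mul]

section Selection

variable {ι : Type*} [Fintype ι] {I X : ι → Ω → ℝ} {c : ℝ → ℝ}

lemma integrable_mul_comp_of_isBasisVector (hI : ∀ ω, IsBasisVector fun i => I i ω)
    (hImeas : ∀ i, Measurable (I i)) (hint : Integrable (fun ω => c (∑ j, I j ω * X j ω)) μ)
    (i : ι) : Integrable (fun ω => I i ω * c (X i ω)) μ := by
  have hset : MeasurableSet {ω | I i ω = 1} := hImeas i (measurableSet_singleton 1)
  have h_eq : (fun ω => I i ω * c (X i ω)) =
      {ω | I i ω = 1}.indicator fun ω => c (∑ j, I j ω * X j ω) := by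
    funext ω
    simp only [Set.indicator_apply, Set.mem_ofPred_eq]
    exact (hI ω).mul_apply_eq_ite c (fun j => X j ω) i
  rw [h_eq]
  exact hint.indicator hset

lemma integral_comp_sum_mul_of_isBasisVector (hI : ∀ ω, IsBasisVector fun i => I i ω)
    (hImeas : ∀ i, Measurable (I i)) (hint : Integrable (fun ω => c (∑ j, I j ω * X j ω)) μ) :
    ∫ ω, c (∑ j, I j ω * X j ω) ∂μ = ∑ i, ∫ ω, I i ω * c (X i ω) ∂μ := by
  simp only [fun ω => (hI ω).apply_sum_mul c (fun j => X j ω)]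
  exact integral_finsetSum _ fun i _ => integrable_mul_comp_of_isBasisVector hI hImeas hint i

end Selection

end Probability

theorem diversified_le_concentrated_convex_order_general
    {Ω : Type*} [MeasurableSpace Ω] (P : Measure Ω) [IsProbabilityMeasure P]
    (n : ℕ)
    (X : Fin n → Ω → ℝ) (hXmeas : ∀ i, Measurable (X i))
    (θ : Fin n → ℝ) (hθ : ∀ i, θ i ∈ Set.Ioo (0 : ℝ) 1) (hθsum : ∑ i, θ i = 1)
    (I : Fin n → Ω → ℝ) (hImeas : ∀ i, Measurable (I i))
    (hIbasis : ∀ ω, ∃ i, I i ω = 1 ∧ ∀ j, j ≠ i → I j ω = 0)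
    (hIprob : ∀ i, P {ω | I i ω = 1} = ENNReal.ofReal (θ i))
    (hIndep : IndepFun (fun ω i => I i ω) (fun ω i => X i ω) P)
    (c : ℝ → ℝ) (hc : ConvexOn ℝ Set.univ c)
    (hint_div : Integrable (fun ω => c (∑ i, θ i * X i ω)) P)
    (hint_con : Integrable (fun ω => c (∑ i, I i ω * X i ω)) P) :
    ∫ ω, c (∑ i, θ i * X i ω) ∂P ≤ ∫ ω, c (∑ i, I i ω * X i ω) ∂P := by
  have hcmeas : Measurable c := (continuousOn_univ.mp (hc.continuousOn isOpen_univ)).measurable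
  have hIθ (i : Fin n) : ∫ ω, I i ω ∂P = θ i := by
    rw [integral_eq_measureReal_of_eq_zero_of_ne_one (hImeas i)
      fun ω => IsBasisVector.eq_zero_of_ne_one (v := fun j => I j ω) (hIbasis ω), measureReal_def, hIprob i,
      ENNReal.toReal_ofReal (hθ i).1.le]
  have hindep (i : Fin n) : IndepFun (I i) (fun ω => c (X i ω)) P :=
    hIndep.comp (measurable_pi_apply i) (hcmeas.comp (measurable_pi_apply i))
  have hcX (i : Fin n) : Integrable (fun ω => c (X i ω)) P :=
    (hindep i).integrable_right_of_integral_ne_zero (by rw [hIθ i]; exact (hθ i).1.ne')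
      (hcmeas.comp (hXmeas i)).aestronglyMeasurable
      (integrable_mul_comp_of_isBasisVector hIbasis hImeas hint_con i)
  calc ∫ ω, c (∑ i, θ i * X i ω) ∂P
      ≤ ∑ i, θ i * ∫ ω, c (X i ω) ∂P :=
        hc.integral_comp_sum_mul_le (fun i => (hθ i).1.le) hθsum hint_div hcX
    _ = ∑ i, ∫ ω, I i ω * c (X i ω) ∂P := by
        refine Finset.sum_congr rfl fun i _ => ?_
        rw [(hindep i).integral_fun_mul_eq_mul_integral (hImeas i).aestronglyMeasurable
          (hcX i).aestronglyMeasurable, hIθ i]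
    _ = ∫ ω, c (∑ i, I i ω * X i ω) ∂P :=
        (integral_comp_sum_mul_of_isBasisVector hIbasis hImeas hint_con).symm

/-- The diversified portfolio is smaller than the concentrated portfolio
in convex order. -/
theorem diversified_le_concentrated_convex_order
    {Ω : Type*} [MeasurableSpace Ω] (P : Measure Ω) [IsProbabilityMeasure P]
    (n : ℕ) (hn : 2 ≤ n)
    (X : Fin n → Ω → ℝ) (hXmeas : ∀ i, Measurable (X i))
    (θ : Fin n → ℝ) (hθ : ∀ i, θ i ∈ Set.Ioo (0 : ℝ) 1) (hθsum : ∑ i, θ i = 1)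
    (I : Fin n → Ω → ℝ) (hImeas : ∀ i, Measurable (I i))
    (hIbasis : ∀ ω, ∃ i, I i ω = 1 ∧ ∀ j, j ≠ i → I j ω = 0)
    (hIprob : ∀ i, P {ω | I i ω = 1} = ENNReal.ofReal (θ i))
    (hIndep : IndepFun (fun ω i => I i ω) (fun ω i => X i ω) P)
    (c : ℝ → ℝ) (hc : ConvexOn ℝ Set.univ c)
    (hint_div : Integrable (fun ω => c (∑ i, θ i * X i ω)) P)
    (hint_con : Integrable (fun ω => c (∑ i, I i ω * X i ω)) P) :
    ∫ ω, c (∑ i, θ i * X i ω) ∂P ≤ ∫ ω, c (∑ i, I i ω * X i ω) ∂P :=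
  diversified_le_concentrated_convex_order_general P n X hXmeas θ hθ hθsum I hImeas hIbasis hIprob
    hIndep c hc hint_div hint_con
end

section
/- Let X_1, …, X_n (n ≥ 2) be mutually independent nonnegative random variables with survival functions F̄_1, …, F̄_n, and let θ = (θ_1, …, θ_n) ∈ Δ_n. Then for every x ≥ 0 with the property that for each index i ∈ {1,…,n} and every proper subset μ of {1,…,n} containing i one has θ_μ · F̄_i(x) ≤ F̄_i(x/θ_μ) (where θ_μ = Σ_{j∈μ} θ_j), it holds that P(θ_1 X_1 + ⋯ + θ_n X_n > x) ≥ θ_1 P(X_1 > x) + ⋯ + θ_n P(X_n > x). -/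
/-!
Couple each `X i` with a uniform variable `U i` through its survival quantile, so that
`X i > c` exactly when `U i < F̄ᵢ(c)`. Put `qᵢ = F̄ᵢ(x)`. If some nonempty `ν` has
`U j < θ_ν q_j` for every `j ∈ ν`, the hypothesis gives `X j > x / θ_ν` on `ν`, hence
`∑ θ_j X_j > x`. So it suffices to show that, for independent uniforms, this event has probability
at least `∑ θ_j q_j`.

Rotating every coordinate `U j < q j` by the same amount `u` inside `[0, q j)` preserves the
uniform law, so one may average over `u`. For fixed `U` the rotations that work have measure at
least `θ_A`, where `A = {j | U j < q j}`, by a cycle-lemma argument on the circle. Finally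
`𝔼 θ_A = ∑ θ_j q_j`.
-/

open MeasureTheory ProbabilityTheory Set

namespace DiversifiedSurvival

/-- A rotation of `AddCircle p`, read on the fundamental domain `[0, p)`. -/
theorem map_mul_fract_div_add_volume_Ico (p u : ℝ) :
    (volume.restrict (Ico 0 p)).map (fun t => p * Int.fract (t / p + u)) =
      volume.restrict (Ico 0 p) := by
  rcases le_or_gt p 0 with hp | hp
  · simp [Ico_eq_empty_of_le hp]
  have : Fact (0 < p) := ⟨hp⟩
  set ν := volume.restrict (Ico (0:ℝ) p)
  let π : ℝ → AddCircle p := QuotientAddGroup.mk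
  let g : AddCircle p → ℝ := fun z => (AddCircle.equivIco p 0 z : ℝ)
  have hπ : MeasurePreserving π ν volume := by
    have := AddCircle.measurePreserving_mk p 0
    rwa [zero_add, ← Measure.restrict_congr_set Ico_ae_eq_Ioc] at this
  have hg : Measurable g :=
    measurable_subtype_coe.comp (AddCircle.measurableEquivIco p 0).measurable
  have hgπ : volume.map g = ν := by
    rw [← hπ.map_eq, Measure.map_map hg hπ.measurable]
    conv_rhs => rw [← Measure.map_id (μ := ν)]
    refine Measure.map_congr ?_
    filter_upwards [ae_restrict_mem measurableSet_Ico] with t ht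
    simpa using AddCircle.equivIco_coe_of_mem (by simpa using ht)
  have hrot : (fun t => p * Int.fract (t / p + u)) = (g ∘ (· + π (p * u))) ∘ π := by
    funext t
    simp [g, π, ← QuotientAddGroup.mk_add, add_div, hp.ne', mul_comm]
  rw [hrot, ← Measure.map_map (hg.comp (measurable_add_const _)) hπ.measurable, hπ.map_eq,
    ← Measure.map_map hg (measurable_add_const _), (measurePreserving_add_right volume _).map_eq,
    hgπ]

lemma fract_sub_eq_sub_of_le {a b : ℝ} (h : Int.fract b ≤ Int.fract a) :
    Int.fract (a - b) = Int.fract a - Int.fract b := by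
  rw [Int.fract_eq_iff]
  refine ⟨by linarith, by linarith [Int.fract_lt_one a, Int.fract_nonneg b], ⌊a⌋ - ⌊b⌋, ?_⟩
  push_cast
  simp only [Int.fract]
  ring

noncomputable def uniform01 : Measure ℝ := volume.restrict (Ico 0 1)

instance : IsProbabilityMeasure uniform01 :=
  ⟨by simp [uniform01]⟩

lemma ae_uniform01_mem_Ioo : ∀ᵐ t ∂uniform01, t ∈ Ioo (0 : ℝ) 1 := by
  rw [uniform01, ← Measure.restrict_congr_set Ioo_ae_eq_Ico]
  exact ae_restrict_mem measurableSet_Ioo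

lemma uniform01_Iio {a : ℝ} (ha : a ≤ 1) : uniform01 (Iio a) = ENNReal.ofReal a := by
  rw [uniform01, Measure.restrict_apply measurableSet_Iio,
    show Iio a ∩ Ico 0 1 = Ico 0 a by ext; simp only [mem_inter_iff, mem_Iio, mem_Ico]; grind,
    Real.volume_Ico, sub_zero]

lemma uniform01_fract_add_lt (c : ℝ) {a : ℝ} (ha : a ≤ 1) :
    uniform01 {u | Int.fract (c + u) < a} = ENNReal.ofReal a := by
  have hmap : uniform01.map (fun t => Int.fract (t + c)) = uniform01 := by
    simpa [uniform01] using map_mul_fract_div_add_volume_Ico 1 c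
  calc uniform01 {u | Int.fract (c + u) < a}
      = uniform01.map (fun t => Int.fract (t + c)) (Iio a) := by
        rw [Measure.map_apply (by fun_prop) measurableSet_Iio]
        simp only [preimage, mem_Iio, add_comm c]
    _ = ENNReal.ofReal a := by rw [hmap, uniform01_Iio ha]

section Cycle

variable {ι : Type*}

def clusterShifts (y θ : ι → ℝ) (s : Finset ι) : Set ℝ :=
  {u | ∃ ν ⊆ s, ν.Nonempty ∧ ∀ j ∈ ν, Int.fract (y j + u) < ∑ k ∈ ν, θ k}

lemma pairwiseDisjoint_fract_add_lt {y θ : ι → ℝ} {s : Finset ι}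
    (hsep : ∀ i ∈ s, ∀ j ∈ s, i ≠ j → θ j ≤ Int.fract (y j - y i)) :
    (s : Set ι).PairwiseDisjoint fun j => {u | Int.fract (y j + u) < θ j} := by
  have key : ∀ i ∈ s, ∀ j ∈ s, i ≠ j → ∀ u, Int.fract (y i + u) ≤ Int.fract (y j + u) →
      θ j ≤ Int.fract (y j + u) := by
    intro i hi j hj hij u hle
    have := fract_sub_eq_sub_of_le hle
    rw [show y j + u - (y i + u) = y j - y i by ring] at this
    linarith [hsep i hi j hj hij, Int.fract_nonneg (y i + u)]
  intro i hi j hj hij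
  refine Set.disjoint_left.2 fun u hui huj => ?_
  rcases le_total (Int.fract (y i + u)) (Int.fract (y j + u)) with h | h
  · exact (key i hi j hj hij u h).not_gt huj
  · exact (key j hj i hi hij.symm u h).not_gt hui

lemma clusterShifts_merge_subset [DecidableEq ι] {y θ : ι → ℝ} {s : Finset ι} {i j : ι}
    (hi : i ∈ s) (hj : j ∈ s) (hij : i ≠ j) (hmerge : Int.fract (y j - y i) < θ j) :
    clusterShifts y (Function.update θ j (θ i + θ j)) (s.erase i) ⊆ clusterShifts y θ s := by
  rintro u ⟨ν, hνs, hν, hlt⟩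
  have hiν : i ∉ ν := fun h => (Finset.mem_erase.1 (hνs h)).1 rfl
  have hνs' : ν ⊆ s := hνs.trans (Finset.erase_subset i s)
  by_cases hjν : j ∈ ν
  swap
  · refine ⟨ν, hνs', hν, ?_⟩
    simpa only [Finset.sum_update_of_notMem hjν] using hlt
  have hsum : ∑ k ∈ ν, Function.update θ j (θ i + θ j) k = ∑ k ∈ insert i ν, θ k := by
    rw [Finset.sum_update_of_mem hjν, Finset.sum_insert hiν, ← Finset.add_sum_erase ν θ hjν,
      Finset.sdiff_singleton_eq_erase]
    ring
  rcases lt_or_ge (Int.fract (y j + u)) (θ j) with hj_near | hj_far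
  · exact ⟨{j}, by simpa using hj, Finset.singleton_nonempty j, by simpa using hj_near⟩
  -- `y i` lies less than `θ j` behind `y j`, while `y j + u` is at least `θ j` past `0`.
  have hi_near : Int.fract (y i + u) ≤ Int.fract (y j + u) := by
    have := fract_sub_eq_sub_of_le (hmerge.le.trans hj_far)
    rw [show y j + u - (y j - y i) = y i + u by ring] at this
    linarith [Int.fract_nonneg (y j - y i)]
  refine ⟨insert i ν, Finset.insert_subset hi hνs', Finset.insert_nonempty i ν, ?_⟩
  rw [← hsum]
  intro k hk
  rcases Finset.mem_insert.1 hk with rfl | hk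
  · exact hi_near.trans_lt (hlt j hjν)
  · exact hlt k hk

/-- Either two points are close enough to be merged into one point of combined weight, which can
only shrink `clusterShifts`, or the arcs `{u | fract (y j + u) < θ j}` are pairwise disjoint. -/
theorem ofReal_sum_le_uniform01_clusterShifts (y : ι → ℝ) (s : Finset ι) {θ : ι → ℝ}
    (hθ : ∀ j ∈ s, 0 ≤ θ j) (hθs : ∑ j ∈ s, θ j ≤ 1) :
    ENNReal.ofReal (∑ j ∈ s, θ j) ≤ uniform01 (clusterShifts y θ s) := by
  classical
  induction s using Finset.strongInduction generalizing θ with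
  | H s ih =>
  by_cases hmerge : ∃ i ∈ s, ∃ j ∈ s, i ≠ j ∧ Int.fract (y j - y i) < θ j
  · obtain ⟨i, hi, j, hj, hij, hlt⟩ := hmerge
    set θ' := Function.update θ j (θ i + θ j)
    have hj' : j ∈ s.erase i := Finset.mem_erase.2 ⟨hij.symm, hj⟩
    have hsum : ∑ k ∈ s.erase i, θ' k = ∑ k ∈ s, θ k := by
      rw [Finset.sum_update_of_mem hj', ← Finset.add_sum_erase s θ hi,
        ← Finset.add_sum_erase (s.erase i) θ hj', Finset.sdiff_singleton_eq_erase]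
      ring
    have hθ' : ∀ k ∈ s.erase i, 0 ≤ θ' k := by
      intro k hk
      rcases eq_or_ne k j with rfl | hkj
      · simpa [θ'] using add_nonneg (hθ i hi) (hθ k hj)
      · simpa [θ', hkj] using hθ k (Finset.mem_of_mem_erase hk)
    calc ENNReal.ofReal (∑ k ∈ s, θ k) = ENNReal.ofReal (∑ k ∈ s.erase i, θ' k) := by rw [hsum]
      _ ≤ uniform01 (clusterShifts y θ' (s.erase i)) :=
        ih _ (Finset.erase_ssubset hi) hθ' (hsum ▸ hθs)
      _ ≤ uniform01 (clusterShifts y θ s) :=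
        measure_mono (clusterShifts_merge_subset hi hj hij hlt)
  · push Not at hmerge
    have hθ1 : ∀ j ∈ s, θ j ≤ 1 := fun j hj => (Finset.single_le_sum hθ hj).trans hθs
    calc ENNReal.ofReal (∑ j ∈ s, θ j) = ∑ j ∈ s, ENNReal.ofReal (θ j) :=
          ENNReal.ofReal_sum_of_nonneg hθ
      _ = ∑ j ∈ s, uniform01 {u | Int.fract (y j + u) < θ j} :=
          Finset.sum_congr rfl fun j hj => (uniform01_fract_add_lt (y j) (hθ1 j hj)).symm
      _ = uniform01 (⋃ j ∈ s, {u | Int.fract (y j + u) < θ j}) :=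
          (measure_biUnion_finset (pairwiseDisjoint_fract_add_lt hmerge)
            fun j _ => measurableSet_lt (by fun_prop) measurable_const).symm
      _ ≤ uniform01 (clusterShifts y θ s) := by
          refine measure_mono (iUnion₂_subset fun j hj u hu => ?_)
          exact ⟨{j}, by simpa using hj, Finset.singleton_nonempty j, by simpa using hu⟩

end Cycle

section Cube

variable {ι : Type*} [Fintype ι]

variable (ι) in
noncomputable def uniformCube : Measure (ι → ℝ) := Measure.pi fun _ => uniform01

instance : IsProbabilityMeasure (uniformCube ι) := by
  unfold uniformCube; infer_instance

lemma ae_uniformCube_mem_Ioo : ∀ᵐ v ∂uniformCube ι, ∀ j, v j ∈ Ioo (0 : ℝ) 1 :=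
  ae_all_iff.2 fun j => (measurePreserving_eval _ j).quasiMeasurePreserving.ae ae_uniform01_mem_Ioo

def cornerUnion (θ q : ι → ℝ) : Set (ι → ℝ) :=
  {v | ∃ ν : Finset ι, ν.Nonempty ∧ ∀ j ∈ ν, v j < (∑ k ∈ ν, θ k) * q j}

lemma measurableSet_cornerUnion (θ q : ι → ℝ) : MeasurableSet (cornerUnion θ q) := by
  simp only [cornerUnion, ofPred_exists, ofPred_and, ofPred_forall]
  exact .iUnion fun ν => (MeasurableSet.const _).inter <| .biInter (to_countable _) fun j _ =>
    measurableSet_lt (measurable_pi_apply j) measurable_const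

noncomputable def rotateBelow (q u t : ℝ) : ℝ := if t < q then q * Int.fract (t / q + u) else t

lemma measurable_rotateBelow (q : ℝ) : Measurable (Function.uncurry (rotateBelow q)) := by
  unfold rotateBelow Function.uncurry
  exact .ite (measurableSet_lt measurable_snd measurable_const) (by fun_prop) (by fun_prop)

lemma map_rotateBelow_uniform01 {q : ℝ} (hq0 : 0 ≤ q) (hq1 : q ≤ 1) (u : ℝ) :
    uniform01.map (rotateBelow q u) = uniform01 := by
  have hsplit : uniform01 = volume.restrict (Ico 0 q) + volume.restrict (Ico q 1) := by
    rw [uniform01, ← Measure.restrict_union (Ico_disjoint_Ico_same) measurableSet_Ico,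
      Ico_union_Ico_eq_Ico hq0 hq1]
  rw [hsplit, Measure.map_add _ _ (measurable_rotateBelow q).of_uncurry_left]
  congr 1
  · conv_rhs => rw [← map_mul_fract_div_add_volume_Ico q u]
    refine Measure.map_congr ?_
    filter_upwards [ae_restrict_mem measurableSet_Ico] with t ht
    simp [rotateBelow, ht.2]
  · conv_rhs => rw [← Measure.map_id (μ := volume.restrict (Ico q 1))]
    refine Measure.map_congr ?_
    filter_upwards [ae_restrict_mem measurableSet_Ico] with t ht
    simp [rotateBelow, not_lt.2 ht.1]

lemma map_rotateBelow_uniformCube {q : ι → ℝ} (hq0 : ∀ j, 0 ≤ q j) (hq1 : ∀ j, q j ≤ 1)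
    (u : ℝ) : (uniformCube ι).map (fun v j => rotateBelow (q j) u (v j)) = uniformCube ι := by
  rw [uniformCube, Measure.pi_map_pi (f := fun j => rotateBelow (q j) u) fun j =>
    (measurable_rotateBelow (q j)).of_uncurry_left.aemeasurable]
  simp_rw [map_rotateBelow_uniform01 (hq0 _) (hq1 _)]

lemma lintegral_sum_ofReal_filter_lt {θ q : ι → ℝ} (hq1 : ∀ j, q j ≤ 1) :
    ∫⁻ v, ∑ j ∈ Finset.univ.filter (fun j => v j < q j), ENNReal.ofReal (θ j) ∂uniformCube ι =
      ∑ j, ENNReal.ofReal (θ j) * ENNReal.ofReal (q j) := by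
  have hind : ∀ v : ι → ℝ, ∑ j ∈ Finset.univ.filter (fun j => v j < q j), ENNReal.ofReal (θ j) =
      ∑ j, (Iio (q j)).indicator (fun _ => ENNReal.ofReal (θ j)) (v j) := by
    intro v
    simp [Finset.sum_filter, indicator_apply]
  simp_rw [hind]
  have hmeas : ∀ j, Measurable fun v : ι → ℝ =>
      (Iio (q j)).indicator (fun _ => ENNReal.ofReal (θ j)) (v j) :=
    fun j => (measurable_const.indicator measurableSet_Iio).comp (measurable_pi_apply j)
  rw [lintegral_finsetSum _ fun j _ => hmeas j]
  refine Finset.sum_congr rfl fun j _ => ?_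
  rw [← uniform01_Iio (hq1 j), ← lintegral_indicator_const measurableSet_Iio]
  exact (measurePreserving_eval (fun _ => uniform01) j).lintegral_comp
    (measurable_const.indicator measurableSet_Iio)

lemma sum_ofReal_le_uniform01_rotateBelow {θ q : ι → ℝ} (hθ : ∀ j, 0 ≤ θ j)
    (hθ1 : ∑ j, θ j ≤ 1) {v : ι → ℝ} (hv : ∀ j, 0 ≤ v j) :
    ∑ j ∈ Finset.univ.filter (fun j => v j < q j), ENNReal.ofReal (θ j) ≤
      uniform01 {u | (fun j => rotateBelow (q j) u (v j)) ∈ cornerUnion θ q} := by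
  set alive := Finset.univ.filter fun j => v j < q j
  have hsum : ∑ j ∈ alive, θ j ≤ 1 :=
    (Finset.sum_le_sum_of_subset_of_nonneg (Finset.subset_univ _) fun j _ _ => hθ j).trans hθ1
  rw [← ENNReal.ofReal_sum_of_nonneg fun j _ => hθ j]
  refine (ofReal_sum_le_uniform01_clusterShifts (fun j => v j / q j) alive
    (fun j _ => hθ j) hsum).trans (measure_mono ?_)
  rintro u ⟨ν, hνalive, hν, hlt⟩
  refine ⟨ν, hν, fun j hj => ?_⟩
  have hvq : v j < q j := (Finset.mem_filter.1 (hνalive hj)).2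
  simp only [rotateBelow, if_pos hvq, mul_comm _ (q j)]
  exact mul_lt_mul_of_pos_left (hlt j hj) ((hv j).trans_lt hvq)

theorem sum_ofReal_mul_le_uniformCube_cornerUnion {θ q : ι → ℝ} (hθ : ∀ j, 0 ≤ θ j)
    (hθ1 : ∑ j, θ j ≤ 1) (hq0 : ∀ j, 0 ≤ q j) (hq1 : ∀ j, q j ≤ 1) :
    ∑ j, ENNReal.ofReal (θ j) * ENNReal.ofReal (q j) ≤ uniformCube ι (cornerUnion θ q) := by
  set T : ℝ → (ι → ℝ) → (ι → ℝ) := fun u v j => rotateBelow (q j) u (v j)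
  have hT : Measurable (Function.uncurry T) := measurable_pi_lambda _ fun j =>
    (measurable_rotateBelow (q j)).comp
      (measurable_fst.prodMk ((measurable_pi_apply j).comp measurable_snd))
  have hA : MeasurableSet {p : ℝ × (ι → ℝ) | T p.1 p.2 ∈ cornerUnion θ q} :=
    hT (measurableSet_cornerUnion θ q)
  calc ∑ j, ENNReal.ofReal (θ j) * ENNReal.ofReal (q j)
      = ∫⁻ v, ∑ j ∈ Finset.univ.filter (fun j => v j < q j), ENNReal.ofReal (θ j)
          ∂uniformCube ι := (lintegral_sum_ofReal_filter_lt hq1).symm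
    _ ≤ ∫⁻ v, uniform01 {u | T u v ∈ cornerUnion θ q} ∂uniformCube ι := by
        refine lintegral_mono_ae ?_
        filter_upwards [ae_uniformCube_mem_Ioo] with v hv
        exact sum_ofReal_le_uniform01_rotateBelow hθ hθ1 fun j => (hv j).1.le
    _ = (uniform01.prod (uniformCube ι)) {p | T p.1 p.2 ∈ cornerUnion θ q} :=
        (Measure.prod_apply_symm hA).symm
    _ = ∫⁻ u, uniformCube ι (T u ⁻¹' cornerUnion θ q) ∂uniform01 := Measure.prod_apply hA
    _ = uniformCube ι (cornerUnion θ q) := by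
        simp_rw [← Measure.map_apply (hT.of_uncurry_left) (measurableSet_cornerUnion θ q),
          T, map_rotateBelow_uniformCube hq0 hq1]
        simp

end Cube

section Quantile

/-- The quantile function of `κ` at level `1 - t`; junk outside `t ∈ (0, 1)`. -/
noncomputable def survivalQuantile (κ : Measure ℝ) (t : ℝ) : ℝ := sInf {v | 1 - t ≤ cdf κ v}

variable (κ : Measure ℝ)

lemma survivalQuantile_le_iff {t : ℝ} (ht : t ∈ Ioo 0 1) (c : ℝ) :
    survivalQuantile κ t ≤ c ↔ 1 - t ≤ cdf κ c := by
  set S := {v | 1 - t ≤ cdf κ v}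
  have hne : S.Nonempty :=
    ((tendsto_cdf_atTop (μ := κ)).eventually_const_lt (by linarith [ht.1])).exists.imp
      fun _ hv => hv.le
  have hbdd : BddBelow S := by
    obtain ⟨v₀, hv₀⟩ := Filter.eventually_atBot.1
      ((tendsto_cdf_atBot (μ := κ)).eventually_lt_const (sub_pos.2 ht.2))
    exact ⟨v₀, fun v hv => le_of_not_gt fun hlt => (hv₀ v hlt.le).not_ge hv⟩
  refine ⟨fun h => ?_, fun h => csInf_le hbdd h⟩
  refine le_trans ?_ (monotone_cdf κ h)
  refine ge_of_tendsto (((cdf κ).right_continuous _).mono Ioi_subset_Ici_self)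
    (eventually_nhdsWithin_of_forall fun w hw => ?_)
  obtain ⟨v, hvS, hvw⟩ := exists_lt_of_csInf_lt hne hw
  exact hvS.trans (monotone_cdf κ hvw.le)

lemma antitoneOn_survivalQuantile : AntitoneOn (survivalQuantile κ) (Ioo 0 1) := by
  intro s hs t ht hst
  rw [survivalQuantile_le_iff κ ht]
  exact le_trans (by linarith) ((survivalQuantile_le_iff κ hs _).1 le_rfl)

lemma aemeasurable_survivalQuantile : AEMeasurable (survivalQuantile κ) uniform01 := by
  rw [uniform01, ← Measure.restrict_congr_set Ioo_ae_eq_Ico]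
  exact aemeasurable_restrict_of_antitoneOn measurableSet_Ioo (antitoneOn_survivalQuantile κ)

variable [IsProbabilityMeasure κ]

lemma lt_survivalQuantile_iff {t : ℝ} (ht : t ∈ Ioo 0 1) (c : ℝ) :
    c < survivalQuantile κ t ↔ ENNReal.ofReal t < κ (Ioi c) := by
  have hIoi : κ (Ioi c) = ENNReal.ofReal (1 - cdf κ c) := by
    rw [← compl_Iic, prob_compl_eq_one_sub measurableSet_Iic, ← ofReal_cdf,
      ENNReal.ofReal_sub _ (cdf_nonneg κ c), ENNReal.ofReal_one]
  rw [← not_le, survivalQuantile_le_iff κ ht, ← not_le, hIoi,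
    ENNReal.ofReal_le_ofReal_iff ht.1.le, sub_le_comm]

theorem map_survivalQuantile_uniform01 : uniform01.map (survivalQuantile κ) = κ := by
  have huniform : uniform01 = volume.restrict (Ioo 0 1) :=
    (Measure.restrict_congr_set Ioo_ae_eq_Ico).symm
  have hmeas := aemeasurable_survivalQuantile κ
  have := Measure.isProbabilityMeasure_map hmeas
  refine Measure.ext_of_Iic _ _ fun c => ?_
  have hpre : survivalQuantile κ ⁻¹' Iic c ∩ Ioo 0 1 = Ici (1 - cdf κ c) ∩ Ioo 0 1 := by
    ext t
    simp only [mem_inter_iff, mem_preimage, mem_Iic, mem_Ici]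
    exact and_congr_left fun ht => (survivalQuantile_le_iff κ ht c).trans sub_le_comm
  rw [Measure.map_apply_of_aemeasurable hmeas measurableSet_Iic, huniform,
    Measure.restrict_apply' measurableSet_Ioo, hpre, ← ofReal_cdf]
  set F := cdf κ c
  apply le_antisymm
  · calc volume (Ici (1 - F) ∩ Ioo 0 1) ≤ volume (Icc (1 - F) 1) :=
          measure_mono fun t ht => ⟨ht.1, ht.2.2.le⟩
      _ = ENNReal.ofReal F := by rw [Real.volume_Icc, sub_sub_cancel]
  · calc ENNReal.ofReal F = volume (Ioo (1 - F) 1) := by rw [Real.volume_Ioo, sub_sub_cancel]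
      _ ≤ volume (Ici (1 - F) ∩ Ioo 0 1) := measure_mono fun t ht =>
          ⟨ht.1.le, by linarith [ht.1, cdf_le_one κ c], ht.2⟩

end Quantile

section Coupling

variable {ι : Type*}

def scaledExceedance (θ : ι → ℝ) (x : ℝ) : Set (ι → ℝ) :=
  {v | ∃ ν : Finset ι, ν.Nonempty ∧ ∀ j ∈ ν, x / ∑ k ∈ ν, θ k < v j}

lemma measurableSet_scaledExceedance [Countable ι] (θ : ι → ℝ) (x : ℝ) :
    MeasurableSet (scaledExceedance θ x) := by
  simp only [scaledExceedance, ofPred_exists, ofPred_and, ofPred_forall]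
  exact .iUnion fun ν => (MeasurableSet.const _).inter <| .biInter (to_countable _) fun j _ =>
    measurableSet_lt measurable_const (measurable_pi_apply j)

lemma lt_sum_mul_of_mem_scaledExceedance [Fintype ι] {θ v : ι → ℝ} {x : ℝ}
    (hθ : ∀ j, 0 < θ j) (hv : ∀ j, 0 ≤ v j) (hx : v ∈ scaledExceedance θ x) :
    x < ∑ j, θ j * v j := by
  obtain ⟨ν, hν, hlt⟩ := hx
  have hθν : 0 < ∑ k ∈ ν, θ k := Finset.sum_pos (fun k _ => hθ k) hν
  calc x = ∑ j ∈ ν, θ j * (x / ∑ k ∈ ν, θ k) := by rw [← Finset.sum_mul]; field_simp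
    _ < ∑ j ∈ ν, θ j * v j :=
        Finset.sum_lt_sum_of_nonempty hν fun j hj => mul_lt_mul_of_pos_left (hlt j hj) (hθ j)
    _ ≤ ∑ j, θ j * v j := Finset.sum_le_sum_of_subset_of_nonneg (Finset.subset_univ ν)
        fun j _ _ => mul_nonneg (hθ j).le (hv j)

lemma survivalQuantile_mem_scaledExceedance {κ : ι → Measure ℝ} [∀ j, IsProbabilityMeasure (κ j)]
    {θ q : ι → ℝ} {x : ℝ}
    (hsurv : ∀ ν : Finset ι, ∀ j ∈ ν,
      ENNReal.ofReal ((∑ k ∈ ν, θ k) * q j) ≤ κ j (Ioi (x / ∑ k ∈ ν, θ k)))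
    {v : ι → ℝ} (hv : ∀ j, v j ∈ Ioo 0 1) (hvq : v ∈ cornerUnion θ q) :
    (fun j => survivalQuantile (κ j) (v j)) ∈ scaledExceedance θ x := by
  obtain ⟨ν, hν, hlt⟩ := hvq
  refine ⟨ν, hν, fun j hj => (lt_survivalQuantile_iff (κ j) (hv j) _).2 ?_⟩
  exact ((ENNReal.ofReal_lt_ofReal_iff_of_nonneg (hv j).1.le).2 (hlt j hj)).trans_le
    (hsurv ν j hj)

variable [Fintype ι]

lemma aemeasurable_survivalQuantile_pi (κ : ι → Measure ℝ) :
    AEMeasurable (fun v j => survivalQuantile (κ j) (v j)) (uniformCube ι) :=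
  aemeasurable_pi_lambda _ fun j =>
    (aemeasurable_survivalQuantile (κ j)).comp_quasiMeasurePreserving
      (Measure.quasiMeasurePreserving_eval _ j)

theorem map_survivalQuantile_uniformCube (κ : ι → Measure ℝ) [∀ j, IsProbabilityMeasure (κ j)] :
    (uniformCube ι).map (fun v j => survivalQuantile (κ j) (v j)) = Measure.pi κ := by
  rw [uniformCube, Measure.pi_map_pi fun j => aemeasurable_survivalQuantile (κ j)]
  simp_rw [map_survivalQuantile_uniform01]

theorem sum_ofReal_mul_le_pi_scaledExceedance (κ : ι → Measure ℝ)
    [∀ j, IsProbabilityMeasure (κ j)] {θ : ι → ℝ} (hθ : ∀ j, 0 ≤ θ j) (hθ1 : ∑ j, θ j ≤ 1)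
    (x : ℝ) (hsurv : ∀ ν : Finset ι, ∀ j ∈ ν,
      ENNReal.ofReal (∑ k ∈ ν, θ k) * κ j (Ioi x) ≤ κ j (Ioi (x / ∑ k ∈ ν, θ k))) :
    ∑ j, ENNReal.ofReal (θ j) * κ j (Ioi x) ≤ Measure.pi κ (scaledExceedance θ x) := by
  set q : ι → ℝ := fun j => (κ j).real (Ioi x)
  have hsurv' : ∀ ν : Finset ι, ∀ j ∈ ν,
      ENNReal.ofReal ((∑ k ∈ ν, θ k) * q j) ≤ κ j (Ioi (x / ∑ k ∈ ν, θ k)) := by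
    intro ν j hj
    rw [ENNReal.ofReal_mul (Finset.sum_nonneg fun k _ => hθ k), ofReal_measureReal]
    exact hsurv ν j hj
  calc ∑ j, ENNReal.ofReal (θ j) * κ j (Ioi x)
      = ∑ j, ENNReal.ofReal (θ j) * ENNReal.ofReal (q j) := by simp [q, ofReal_measureReal]
    _ ≤ uniformCube ι (cornerUnion θ q) := sum_ofReal_mul_le_uniformCube_cornerUnion hθ hθ1
          (fun _ => measureReal_nonneg) (fun _ => measureReal_le_one)
    _ ≤ uniformCube ι ((fun v j => survivalQuantile (κ j) (v j)) ⁻¹' scaledExceedance θ x) := by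
        refine measure_mono_ae ?_
        filter_upwards [ae_uniformCube_mem_Ioo] with v hv hvq
        exact survivalQuantile_mem_scaledExceedance hsurv' hv hvq
    _ = Measure.pi κ (scaledExceedance θ x) := by
        rw [← Measure.map_apply_of_aemeasurable (aemeasurable_survivalQuantile_pi κ)
          (measurableSet_scaledExceedance θ x), map_survivalQuantile_uniformCube]

end Coupling

end DiversifiedSurvival

open DiversifiedSurvival

theorem diversified_survival_lower_bound_general
    {Ω : Type*} [MeasurableSpace Ω] (P : Measure Ω) [IsProbabilityMeasure P]
    (n : ℕ)
    (X : Fin n → Ω → ℝ) (hXmeas : ∀ i, Measurable (X i)) (hXpos : ∀ i ω, 0 ≤ X i ω)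
    (hIndep : iIndepFun X P)
    (θ : Fin n → ℝ) (hθ : ∀ i, θ i ∈ Set.Ioo (0 : ℝ) 1) (hθsum : ∑ i, θ i = 1)
    (x : ℝ)
    (hcond : ∀ i : Fin n, ∀ μ : Finset (Fin n), i ∈ μ → μ ≠ Finset.univ →
      ENNReal.ofReal (∑ j ∈ μ, θ j) * P {ω | X i ω > x} ≤
        P {ω | X i ω > x / (∑ j ∈ μ, θ j)}) :
    ∑ i, ENNReal.ofReal (θ i) * P {ω | X i ω > x} ≤
      P {ω | ∑ i, θ i * X i ω > x} := by
  set κ : Fin n → Measure ℝ := fun i => P.map (X i)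
  have : ∀ i, IsProbabilityMeasure (κ i) :=
    fun i => Measure.isProbabilityMeasure_map (hXmeas i).aemeasurable
  have hκ : ∀ i c, κ i (Ioi c) = P {ω | X i ω > c} :=
    fun i c => Measure.map_apply (hXmeas i) measurableSet_Ioi
  have hsurv : ∀ ν : Finset (Fin n), ∀ j ∈ ν,
      ENNReal.ofReal (∑ k ∈ ν, θ k) * κ j (Ioi x) ≤ κ j (Ioi (x / ∑ k ∈ ν, θ k)) := by
    intro ν j hj
    rcases eq_or_ne ν Finset.univ with rfl | hne
    · simp [hθsum]
    · simpa only [hκ] using hcond j ν hj hne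
  calc ∑ i, ENNReal.ofReal (θ i) * P {ω | X i ω > x}
      = ∑ i, ENNReal.ofReal (θ i) * κ i (Ioi x) := by simp only [hκ]
    _ ≤ Measure.pi κ (scaledExceedance θ x) := sum_ofReal_mul_le_pi_scaledExceedance κ
          (fun i => (hθ i).1.le) hθsum.le x hsurv
    _ = P ((fun ω i => X i ω) ⁻¹' scaledExceedance θ x) := by
        rw [← hIndep.map_fun_eq_pi_map fun i => (hXmeas i).aemeasurable,
          Measure.map_apply (measurable_pi_lambda _ hXmeas) (measurableSet_scaledExceedance θ x)]
    _ ≤ P {ω | ∑ i, θ i * X i ω > x} := measure_mono fun ω hω =>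
        lt_sum_mul_of_mem_scaledExceedance (fun i => (hθ i).1) (fun i => hXpos i ω) hω

/-- lower bound for the survival function of the diversified portfolio
at points where the subscalability inequalities hold for all relevant subset weights. -/
theorem diversified_survival_lower_bound
    {Ω : Type*} [MeasurableSpace Ω] (P : Measure Ω) [IsProbabilityMeasure P]
    (n : ℕ) (hn : 2 ≤ n)
    (X : Fin n → Ω → ℝ) (hXmeas : ∀ i, Measurable (X i)) (hXpos : ∀ i ω, 0 ≤ X i ω)
    (hIndep : iIndepFun X P)
    (θ : Fin n → ℝ) (hθ : ∀ i, θ i ∈ Set.Ioo (0 : ℝ) 1) (hθsum : ∑ i, θ i = 1)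
    (x : ℝ) (hx : 0 ≤ x)
    (hcond : ∀ i : Fin n, ∀ μ : Finset (Fin n), i ∈ μ → μ ≠ Finset.univ →
      ENNReal.ofReal (∑ j ∈ μ, θ j) * P {ω | X i ω > x} ≤
        P {ω | X i ω > x / (∑ j ∈ μ, θ j)}) :
    ∑ i, ENNReal.ofReal (θ i) * P {ω | X i ω > x} ≤
      P {ω | ∑ i, θ i * X i ω > x} :=
  diversified_survival_lower_bound_general P n X hXmeas hXpos hIndep θ hθ hθsum x hcond
end

section
/- Let X_1, …, X_n (n ≥ 2) be mutually independent random variables where each X_i is Pareto distributed with shape parameter α_i ∈ (0,1] and scale parameter ρ_i > 0, that is, P(X_i > x) = (ρ_i/x)^{α_i} for x ≥ ρ_i and P(X_i > x) = 1 for x < ρ_i. Then for every weight vector θ = (θ_1, …, θ_n) ∈ Δ_n and every x ≥ 0, P(θ_1 X_1 + ⋯ + θ_n X_n > x) ≥ θ_1 P(X_1 > x) + ⋯ + θ_n P(X_n > x); equivalently, the Categorical(θ) mixture I_1 X_1 + ⋯ + I_n X_n (with I independent of the X_i) satisfies I_1 X_1 + ⋯ + I_n X_n ≤_st θ_1 X_1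 + ⋯ + θ_n X_n. -/
/-!
Put `m = ∑ θⱼ ρⱼ`, `uⱼ = min 1 (ρⱼ / x)` and `tᵢ = ρᵢ + (x - m) / θᵢ`. Since `Xⱼ ≥ ρⱼ` almost
surely, for `x ≥ m` the basket `∑ θⱼ Xⱼ` exceeds `x` as soon as a single `Xᵢ` exceeds `tᵢ`, so by
independence `P(∑ θⱼ Xⱼ > x) ≥ 1 - ∏ (1 - (ρᵢ / tᵢ) ^ αᵢ)`, while `∑ θᵢ P(Xᵢ > x) = ∑ θᵢ uᵢ ^ αᵢ`.
Peeling off the factors of the product in increasing order of `αᵢ`, each step reduces to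
`θᵢ uᵢ ^ αᵢ ≤ (ρᵢ / tᵢ) ^ αᵢ (1 - ∑ⱼ θⱼ uⱼ ^ αⱼ)` over the `j` with `αⱼ ≥ αᵢ` not yet peeled off,
which follows from two weighted AM-GM inequalities with weights `αᵢ, 1 - αᵢ` (this is where
`αᵢ ≤ 1` enters). For `x < m` the basket exceeds `x` almost surely. Finally, the survival function
of the mixture `∑ Iᵢ Xᵢ` is at most `∑ θᵢ P(Xᵢ > x)`.
-/

open MeasureTheory ProbabilityTheory Finset

namespace Real

lemma rpow_le_one_sub_add_mul {u a : ℝ} (hu : 0 ≤ u) (ha₀ : 0 ≤ a) (ha₁ : a ≤ 1) :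
    u ^ a ≤ 1 - a + a * u := by
  have h := rpow_one_add_le_one_add_mul_self (s := u - 1) (by linarith) ha₀ ha₁
  rw [add_sub_cancel] at h
  linarith

lemma mul_rpow_le_of_mul_le {θ v b D a : ℝ} (hθ : 0 ≤ θ) (hv : 0 ≤ v) (hb : 0 ≤ b)
    (hD : 0 ≤ D) (ha₀ : 0 ≤ a) (ha₁ : a ≤ 1) (h : θ * v ≤ b * D) :
    θ * v ^ a ≤ b ^ a * ((1 - a) * θ + a * D) :=
  calc θ * v ^ a = θ ^ (1 - a) * (θ * v) ^ a := by
        rw [mul_rpow hθ hv, ← mul_assoc, ← rpow_add' hθ (by simp), sub_add_cancel, rpow_one]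
    _ ≤ θ ^ (1 - a) * (b * D) ^ a := by gcongr
    _ = b ^ a * (θ ^ (1 - a) * D ^ a) := by rw [mul_rpow hb hD]; ring
    _ ≤ b ^ a * ((1 - a) * θ + a * D) := by
        gcongr
        exact geom_mean_le_arith_mean2_weighted (by linarith) ha₀ hθ hD (by ring)

end Real

theorem Finset.prod_one_sub_le_one_sub_sum {ι β R : Type*} [LinearOrder β] [CommRing R]
    [LinearOrder R] [IsStrictOrderedRing R] (key : ι → β) {p q : ι → R} (hq : ∀ i, q i ≤ 1)
    (h : ∀ i (t : Finset ι), i ∉ t → (∀ j ∈ t, key i ≤ key j) →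
      p i ≤ q i * (1 - ∑ j ∈ t, p j))
    (s : Finset ι) : ∏ i ∈ s, (1 - q i) ≤ 1 - ∑ i ∈ s, p i := by
  classical
  induction s using Finset.induction_on_min_value key with
  | empty => simp
  | insert i s hi hmin ih =>
    rw [prod_insert hi, sum_insert hi]
    have hpi := h i s hi hmin
    calc (1 - q i) * ∏ j ∈ s, (1 - q j) ≤ (1 - q i) * (1 - ∑ j ∈ s, p j) := by
          gcongr; linarith [hq i]
      _ ≤ 1 - (p i + ∑ j ∈ s, p j) := by linarith

theorem Finset.add_sum_le_univ_sum {ι M : Type*} [Fintype ι] [AddCommMonoid M] [PartialOrder M]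
    [IsOrderedAddMonoid M] {f : ι → M} (hf : ∀ j, 0 ≤ f j) {i : ι} {t : Finset ι} (hi : i ∉ t) :
    f i + ∑ j ∈ t, f j ≤ ∑ j, f j := by
  classical
  rw [← sum_insert hi]
  exact sum_le_univ_sum_of_nonneg hf

section Basket

variable {ι : Type*} [Fintype ι] {θ ρ α : ι → ℝ} {x : ℝ}

/-- If every `z j` sits at its floor `ρ j`, then `z i` has to exceed this threshold for the
basket `∑ j, θ j * z j` to exceed `x`. -/
noncomputable def basketThreshold (θ ρ : ι → ℝ) (x : ℝ) (i : ι) : ℝ :=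
  ρ i + (x - ∑ j, θ j * ρ j) / θ i

lemma mul_basketThreshold {i : ι} (hθ : θ i ≠ 0) :
    θ i * basketThreshold θ ρ x i = θ i * ρ i + (x - ∑ j, θ j * ρ j) := by
  rw [basketThreshold, mul_add, mul_div_cancel₀ _ hθ]

lemma lt_sum_mul_of_basketThreshold_lt {z : ι → ℝ} (hθ : ∀ j, 0 < θ j) (hz : ∀ j, ρ j ≤ z j)
    {i : ι} (hi : basketThreshold θ ρ x i < z i) : x < ∑ j, θ j * z j := by
  have hzi : θ i * ρ i + (x - ∑ j, θ j * ρ j) < θ i * z i :=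
    mul_basketThreshold (hθ i).ne' ▸ mul_lt_mul_of_pos_left hi (hθ i)
  have hgap : θ i * (z i - ρ i) ≤ ∑ j, θ j * (z j - ρ j) :=
    single_le_sum (fun j _ => mul_nonneg (hθ j).le (sub_nonneg.2 (hz j))) (mem_univ i)
  simp only [mul_sub, sum_sub_distrib] at hgap
  linarith

lemma mul_basketThreshold_div_le_one_sub_sum (hθ : ∀ i, 0 < θ i) (hρ : ∀ i, 0 < ρ i)
    (hx : 0 < x) {i : ι} {t : Finset ι} (hi : i ∉ t) :
    θ i * basketThreshold θ ρ x i / x ≤ 1 - ∑ j ∈ t, θ j * min 1 (ρ j / x) := by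
  have hθρt : θ i * ρ i + ∑ j ∈ t, θ j * ρ j ≤ ∑ j, θ j * ρ j :=
    add_sum_le_univ_sum (fun j => (mul_pos (hθ j) (hρ j)).le) hi
  have hsum : (∑ j ∈ t, θ j * min 1 (ρ j / x)) * x ≤ ∑ j ∈ t, θ j * ρ j := by
    rw [sum_mul]
    refine sum_le_sum fun j _ => ?_
    rw [mul_assoc]
    exact mul_le_mul_of_nonneg_left ((le_div_iff₀ hx).1 (min_le_right _ _)) (hθ j).le
  rw [div_le_iff₀ hx, mul_basketThreshold (hθ i).ne', sub_mul, one_mul]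
  linarith

lemma mul_min_rpow_le_rpow_basketThreshold_mul (hθ : ∀ i, 0 < θ i) (hθsum : ∑ i, θ i = 1)
    (hρ : ∀ i, 0 < ρ i) (hα : ∀ i, α i ∈ Set.Ioc (0 : ℝ) 1) (hxm : ∑ j, θ j * ρ j ≤ x)
    (hx : 0 < x) {i : ι} {t : Finset ι} (hi : i ∉ t) (hmin : ∀ j ∈ t, α i ≤ α j) :
    θ i * min 1 (ρ i / x) ^ α i ≤
      (ρ i / basketThreshold θ ρ x i) ^ α i * (1 - ∑ j ∈ t, θ j * min 1 (ρ j / x) ^ α j) := by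
  set u : ι → ℝ := fun j => min 1 (ρ j / x)
  set T := basketThreshold θ ρ x i
  set a := α i
  obtain ⟨ha₀, ha₁⟩ := hα i
  set D := 1 - ∑ j ∈ t, θ j * u j
  have hu₀ : ∀ j, 0 < u j := fun j => lt_min zero_lt_one (div_pos (hρ j) hx)
  have hTpos : 0 < T := by
    refine pos_of_mul_pos_right ?_ (hθ i).le
    rw [mul_basketThreshold (hθ i).ne']
    linarith [mul_pos (hθ i) (hρ i)]
  have hD : θ i * T / x ≤ D := mul_basketThreshold_div_le_one_sub_sum hθ hρ hx hi
  have hb : 0 ≤ ρ i / T := (div_pos (hρ i) hTpos).le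
  have hcap : θ i * u i ≤ ρ i / T * D :=
    calc θ i * u i ≤ θ i * (ρ i / x) := mul_le_mul_of_nonneg_left (min_le_right _ _) (hθ i).le
      _ = ρ i / T * (θ i * T / x) := by field_simp
      _ ≤ ρ i / T * D := mul_le_mul_of_nonneg_left hD hb
  have hrest : (1 - a) * θ i + a * D ≤ 1 - ∑ j ∈ t, θ j * u j ^ α j := by
    have hθt : θ i + ∑ j ∈ t, θ j ≤ 1 := hθsum ▸ add_sum_le_univ_sum (fun j => (hθ j).le) hi
    have hpow : ∑ j ∈ t, θ j * u j ^ α j ≤ ∑ j ∈ t, θ j * (1 - a + a * u j) :=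
      sum_le_sum fun j hj => mul_le_mul_of_nonneg_left
        ((Real.rpow_le_rpow_of_exponent_ge (hu₀ j) (min_le_left _ _) (hmin j hj)).trans
          (Real.rpow_le_one_sub_add_mul (hu₀ j).le ha₀.le ha₁)) (hθ j).le
    have hsplit : ∑ j ∈ t, θ j * (1 - a + a * u j) =
        (1 - a) * ∑ j ∈ t, θ j + a * ∑ j ∈ t, θ j * u j := by
      rw [mul_sum, mul_sum, ← sum_add_distrib]
      exact sum_congr rfl fun j _ => by ring
    have : (1 - a) * ∑ j ∈ t, θ j ≤ (1 - a) * (1 - θ i) :=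
      mul_le_mul_of_nonneg_left (by linarith) (by linarith)
    simp only [D]
    linarith
  calc θ i * u i ^ a ≤ (ρ i / T) ^ a * ((1 - a) * θ i + a * D) :=
        Real.mul_rpow_le_of_mul_le (hθ i).le (hu₀ i).le hb
          ((div_nonneg (mul_pos (hθ i) hTpos).le hx.le).trans hD) ha₀.le ha₁ hcap
    _ ≤ (ρ i / T) ^ a * (1 - ∑ j ∈ t, θ j * u j ^ α j) :=
        mul_le_mul_of_nonneg_left hrest (Real.rpow_nonneg hb _)

lemma sum_mul_min_rpow_le_one_sub_prod (hθ : ∀ i, 0 < θ i) (hθsum : ∑ i, θ i = 1)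
    (hρ : ∀ i, 0 < ρ i) (hα : ∀ i, α i ∈ Set.Ioc (0 : ℝ) 1) (hxm : ∑ j, θ j * ρ j ≤ x)
    (hx : 0 < x) :
    ∑ i, θ i * min 1 (ρ i / x) ^ α i ≤
      1 - ∏ i, (1 - (ρ i / basketThreshold θ ρ x i) ^ α i) := by
  have hρT : ∀ i, ρ i ≤ basketThreshold θ ρ x i := fun i =>
    le_add_of_nonneg_right (div_nonneg (sub_nonneg.2 hxm) (hθ i).le)
  have hq : ∀ i, (ρ i / basketThreshold θ ρ x i) ^ α i ≤ 1 := fun i =>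
    Real.rpow_le_one (div_nonneg (hρ i).le ((hρ i).le.trans (hρT i)))
      (div_le_one_of_le₀ (hρT i) ((hρ i).le.trans (hρT i))) (hα i).1.le
  have := prod_one_sub_le_one_sub_sum α hq (fun i t hi hmin =>
    mul_min_rpow_le_rpow_basketThreshold_mul hθ hθsum hρ hα hxm hx hi hmin) univ
  linarith

end Basket

section Probability

variable {Ω ι : Type*} [MeasurableSpace Ω] {P : Measure Ω}

lemma ae_le_of_forall_lt_measure_gt_eq_one [IsProbabilityMeasure P] {Y : Ω → ℝ} {c : ℝ}
    (hY : Measurable Y) (h : ∀ t < c, P {ω | Y ω > t} = 1) : ∀ᵐ ω ∂P, c ≤ Y ω := by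
  have hgt : ∀ k : ℕ, ∀ᵐ ω ∂P, c - 1 / (k + 1) < Y ω := fun k =>
    ae_iff.2 <| (prob_compl_eq_zero_iff (measurableSet_lt measurable_const hY)).2 <|
      h _ (sub_lt_self c Nat.one_div_pos_of_nat)
  filter_upwards [ae_all_iff.2 hgt] with ω hω
  refine le_of_forall_pos_lt_add fun ε hε => ?_
  obtain ⟨k, hk⟩ := exists_nat_one_div_lt hε
  linarith [hω k]

lemma ProbabilityTheory.iIndepFun.measureReal_iUnion_gt [IsProbabilityMeasure P] [Fintype ι]
    {X : ι → Ω → ℝ} (hX : ∀ i, Measurable (X i)) (hindep : iIndepFun X P) (t : ι → ℝ) :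
    P.real (⋃ i, {ω | X i ω > t i}) = 1 - ∏ i, (1 - P.real {ω | X i ω > t i}) := by
  have hunion : ⋃ i, {ω | X i ω > t i} = (⋂ i, {ω | X i ω ≤ t i})ᶜ := by
    ext ω; simp
  have hle : ∀ i, P.real {ω | X i ω ≤ t i} = 1 - P.real {ω | X i ω > t i} := fun i => by
    rw [← probReal_compl_eq_one_sub (measurableSet_lt measurable_const (hX i))]
    congr 1; ext ω; simp
  rw [hunion, probReal_compl_eq_one_sub
      (MeasurableSet.iInter fun i => measurableSet_le (hX i) measurable_const),
    measureReal_def, hindep.meas_iInter (s := fun i => {ω | X i ω ≤ t i})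
      fun i => ⟨Set.Iic (t i), measurableSet_Iic, rfl⟩,
    ENNReal.toReal_prod]
  simp_rw [← measureReal_def, hle]

lemma measure_sum_mul_gt_le_of_categorical [Fintype ι] {I Y : ι → Ω → ℝ} {θ : ι → ℝ}
    (hbasis : ∀ ω, ∃ i, I i ω = 1 ∧ ∀ j, j ≠ i → I j ω = 0)
    (hprob : ∀ i, P {ω | I i ω = 1} = ENNReal.ofReal (θ i))
    (hindep : IndepFun (fun ω i => I i ω) (fun ω i => Y i ω) P) (x : ℝ) :
    P {ω | ∑ i, I i ω * Y i ω > x} ≤ ∑ i, ENNReal.ofReal (θ i) * P {ω | Y i ω > x} := by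
  have hsub : {ω | ∑ i, I i ω * Y i ω > x} ⊆ ⋃ i, {ω | I i ω = 1} ∩ {ω | Y i ω > x} := by
    intro ω hω
    obtain ⟨i, hi, hj⟩ := hbasis ω
    have hsum : ∑ j, I j ω * Y j ω = Y i ω := by
      rw [sum_eq_single i (fun j _ hji => by rw [hj j hji, zero_mul]) (by simp), hi, one_mul]
    exact Set.mem_iUnion.2 ⟨i, hi, by simpa [hsum] using hω⟩
  have hfactor : ∀ i, P ({ω | I i ω = 1} ∩ {ω | Y i ω > x}) =
      ENNReal.ofReal (θ i) * P {ω | Y i ω > x} := fun i => by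
    rw [← hprob i]
    exact hindep.measure_inter_preimage_eq_mul {v | v i = 1} {v | v i > x}
      (measurableSet_eq_fun (measurable_pi_apply i) measurable_const)
      (measurableSet_lt measurable_const (measurable_pi_apply i))
  calc P {ω | ∑ i, I i ω * Y i ω > x} ≤ ∑ i, P ({ω | I i ω = 1} ∩ {ω | Y i ω > x}) :=
        (measure_mono hsub).trans (measure_iUnion_fintype_le P _)
    _ = ∑ i, ENNReal.ofReal (θ i) * P {ω | Y i ω > x} := sum_congr rfl fun i _ => hfactor i

end Probability

section Pareto

variable {Ω ι : Type*} [MeasurableSpace Ω] {P : Measure Ω}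

structure IsPareto (Y : Ω → ℝ) (α ρ : ℝ) (P : Measure Ω) : Prop where
  measure_gt_of_le : ∀ x, ρ ≤ x → P {ω | Y ω > x} = ENNReal.ofReal ((ρ / x) ^ α)
  measure_gt_of_lt : ∀ x, x < ρ → P {ω | Y ω > x} = 1

namespace IsPareto

variable {Y : Ω → ℝ} {α ρ x : ℝ}

lemma ae_le [IsProbabilityMeasure P] (h : IsPareto Y α ρ P) (hY : Measurable Y) :
    ∀ᵐ ω ∂P, ρ ≤ Y ω :=
  ae_le_of_forall_lt_measure_gt_eq_one hY h.measure_gt_of_lt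

lemma measureReal_gt_of_le (h : IsPareto Y α ρ P) (hρ : 0 ≤ ρ) (hx : ρ ≤ x) :
    P.real {ω | Y ω > x} = (ρ / x) ^ α := by
  rw [measureReal_def, h.measure_gt_of_le x hx,
    ENNReal.toReal_ofReal (Real.rpow_nonneg (div_nonneg hρ (hρ.trans hx)) _)]

lemma measureReal_gt (h : IsPareto Y α ρ P) (hρ : 0 ≤ ρ) (hx : 0 < x) :
    P.real {ω | Y ω > x} = min 1 (ρ / x) ^ α := by
  rcases le_or_gt ρ x with hρx | hxρ
  · rw [min_eq_right ((div_le_one hx).2 hρx), h.measureReal_gt_of_le hρ hρx]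
  · rw [min_eq_left ((one_le_div hx).2 hxρ.le), Real.one_rpow, measureReal_def,
      h.measure_gt_of_lt x hxρ, ENNReal.toReal_one]

end IsPareto

theorem sum_mul_measureReal_gt_le_of_isPareto [IsProbabilityMeasure P] [Fintype ι]
    {X : ι → Ω → ℝ} {α ρ θ : ι → ℝ} (hXm : ∀ i, Measurable (X i)) (hindep : iIndepFun X P)
    (hX : ∀ i, IsPareto (X i) (α i) (ρ i) P) (hα : ∀ i, α i ∈ Set.Ioc (0 : ℝ) 1)
    (hρ : ∀ i, 0 < ρ i) (hθ : ∀ i, 0 < θ i) (hθsum : ∑ i, θ i = 1) (x : ℝ) :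
    ∑ i, θ i * P.real {ω | X i ω > x} ≤ P.real {ω | ∑ i, θ i * X i ω > x} := by
  have hfloor : ∀ᵐ ω ∂P, ∀ i, ρ i ≤ X i ω := ae_all_iff.2 fun i => (hX i).ae_le (hXm i)
  rcases lt_or_ge x (∑ j, θ j * ρ j) with hxm | hxm
  · have hsure : P.real {ω | ∑ i, θ i * X i ω > x} = 1 := by
      refine (measureReal_congr (ae_eq_univ.2 (ae_iff.1 (hfloor.mono fun ω hω => ?_)))).trans
        probReal_univ
      exact hxm.trans_le (sum_le_sum fun i _ => mul_le_mul_of_nonneg_left (hω i) (hθ i).le)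
    calc ∑ i, θ i * P.real {ω | X i ω > x} ≤ ∑ i, θ i :=
          sum_le_sum fun i _ => mul_le_of_le_one_right (hθ i).le measureReal_le_one
      _ = P.real {ω | ∑ i, θ i * X i ω > x} := by rw [hθsum, hsure]
  · have hx : 0 < x := (sum_pos (fun j _ => mul_pos (hθ j) (hρ j))
      (nonempty_of_sum_ne_zero (hθsum ▸ one_ne_zero))).trans_le hxm
    have hρT : ∀ i, ρ i ≤ basketThreshold θ ρ x i := fun i =>
      le_add_of_nonneg_right (div_nonneg (sub_nonneg.2 hxm) (hθ i).le)
    calc ∑ i, θ i * P.real {ω | X i ω > x} = ∑ i, θ i * min 1 (ρ i / x) ^ α i := by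
          simp_rw [fun i => (hX i).measureReal_gt (hρ i).le hx]
      _ ≤ 1 - ∏ i, (1 - (ρ i / basketThreshold θ ρ x i) ^ α i) :=
          sum_mul_min_rpow_le_one_sub_prod hθ hθsum hρ hα hxm hx
      _ = P.real (⋃ i, {ω | X i ω > basketThreshold θ ρ x i}) := by
          simp_rw [hindep.measureReal_iUnion_gt hXm,
            fun i => (hX i).measureReal_gt_of_le (hρ i).le (hρT i)]
      _ ≤ P.real {ω | ∑ i, θ i * X i ω > x} :=
          ENNReal.toReal_mono (measure_ne_top _ _) <| measure_mono_ae <|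
            hfloor.mono fun ω hω hω' => by
              obtain ⟨i, hi⟩ := Set.mem_iUnion.1 hω'
              exact lt_sum_mul_of_basketThreshold_lt hθ hω hi

end Pareto

theorem pareto_one_basket_general
    {Ω : Type*} [MeasurableSpace Ω] (P : Measure Ω) [IsProbabilityMeasure P]
    (n : ℕ)
    (X : Fin n → Ω → ℝ) (hXmeas : ∀ i, Measurable (X i))
    (hIndep : iIndepFun X P)
    (α : Fin n → ℝ) (hα : ∀ i, α i ∈ Set.Ioc (0 : ℝ) 1)
    (ρ : Fin n → ℝ) (hρ : ∀ i, 0 < ρ i)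
    (hsurv : ∀ i, ∀ x : ℝ, ρ i ≤ x →
      P {ω | X i ω > x} = ENNReal.ofReal ((ρ i / x) ^ (α i)))
    (hsurv' : ∀ i, ∀ x : ℝ, x < ρ i → P {ω | X i ω > x} = 1)
    (θ : Fin n → ℝ) (hθ : ∀ i, θ i ∈ Set.Ioo (0 : ℝ) 1) (hθsum : ∑ i, θ i = 1)
    (I : Fin n → Ω → ℝ)
    (hIbasis : ∀ ω, ∃ i, I i ω = 1 ∧ ∀ j, j ≠ i → I j ω = 0)
    (hIprob : ∀ i, P {ω | I i ω = 1} = ENNReal.ofReal (θ i))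
    (hIXindep : IndepFun (fun ω i => I i ω) (fun ω i => X i ω) P) :
    (∀ x : ℝ, 0 ≤ x →
      ∑ i, ENNReal.ofReal (θ i) * P {ω | X i ω > x} ≤
        P {ω | ∑ i, θ i * X i ω > x}) ∧
    (∀ x : ℝ, P {ω | ∑ i, I i ω * X i ω > x} ≤ P {ω | ∑ i, θ i * X i ω > x}) := by
  have hθpos : ∀ i, 0 < θ i := fun i => (hθ i).1
  have hbasket : ∀ x : ℝ,
      ∑ i, ENNReal.ofReal (θ i) * P {ω | X i ω > x} ≤ P {ω | ∑ i, θ i * X i ω > x} := by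
    intro x
    have h := sum_mul_measureReal_gt_le_of_isPareto hXmeas hIndep
      (fun i => ⟨hsurv i, hsurv' i⟩) hα hρ hθpos hθsum x
    calc ∑ i, ENNReal.ofReal (θ i) * P {ω | X i ω > x}
        = ENNReal.ofReal (∑ i, θ i * P.real {ω | X i ω > x}) := by
          rw [ENNReal.ofReal_sum_of_nonneg fun i _ => mul_nonneg (hθpos i).le measureReal_nonneg]
          exact sum_congr rfl fun i _ => by rw [ENNReal.ofReal_mul (hθpos i).le, ofReal_measureReal]
      _ ≤ ENNReal.ofReal (P.real {ω | ∑ i, θ i * X i ω > x}) := ENNReal.ofReal_le_ofReal h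
      _ = P {ω | ∑ i, θ i * X i ω > x} := ofReal_measureReal
  exact ⟨fun x _ => hbasket x,
    fun x => (measure_sum_mul_gt_le_of_categorical hIbasis hIprob hIXindep x).trans (hbasket x)⟩

/-- for independent infinite-mean Pareto risks (possibly with different
parameters), every weighted average dominates the corresponding Categorical(θ)
mixture in first-order stochastic dominance. -/
theorem pareto_one_basket
    {Ω : Type*} [MeasurableSpace Ω] (P : Measure Ω) [IsProbabilityMeasure P]
    (n : ℕ) (hn : 2 ≤ n)
    (X : Fin n → Ω → ℝ) (hXmeas : ∀ i, Measurable (X i))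
    (hIndep : iIndepFun X P)
    (α : Fin n → ℝ) (hα : ∀ i, α i ∈ Set.Ioc (0 : ℝ) 1)
    (ρ : Fin n → ℝ) (hρ : ∀ i, 0 < ρ i)
    (hsurv : ∀ i, ∀ x : ℝ, ρ i ≤ x →
      P {ω | X i ω > x} = ENNReal.ofReal ((ρ i / x) ^ (α i)))
    (hsurv' : ∀ i, ∀ x : ℝ, x < ρ i → P {ω | X i ω > x} = 1)
    (θ : Fin n → ℝ) (hθ : ∀ i, θ i ∈ Set.Ioo (0 : ℝ) 1) (hθsum : ∑ i, θ i = 1)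
    (I : Fin n → Ω → ℝ) (hImeas : ∀ i, Measurable (I i))
    (hIbasis : ∀ ω, ∃ i, I i ω = 1 ∧ ∀ j, j ≠ i → I j ω = 0)
    (hIprob : ∀ i, P {ω | I i ω = 1} = ENNReal.ofReal (θ i))
    (hIXindep : IndepFun (fun ω i => I i ω) (fun ω i => X i ω) P) :
    (∀ x : ℝ, 0 ≤ x →
      ∑ i, ENNReal.ofReal (θ i) * P {ω | X i ω > x} ≤
        P {ω | ∑ i, θ i * X i ω > x}) ∧
    (∀ x : ℝ, P {ω | ∑ i, I i ω * X i ω > x} ≤ P {ω | ∑ i, θ i * X i ω > x}) :=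
  pareto_one_basket_general P n X hXmeas hIndep α hα ρ hρ hsurv hsurv' θ hθ hθsum I hIbasis hIprob
    hIXindep
end

section
/- Let F̄ be the survival function defined by F̄(x) = 1 for x < 0 and F̄(x) = 1/(⌊x⌋ + 2) for x ≥ 0 (the shifted discrete Pareto distribution), and let θ ∈ (0,1). Then the inequality θ·F̄(x) ≤ F̄(x/θ) holds for all x ≥ 0 if and only if θ belongs to the set A = (0, 1/2] ∪ { (k+1)/(2k+1) : k ∈ ℕ, k ≥ 1 }. -/
/-- Survival function of the shifted discrete Pareto distribution:
`F̄(x) = 1` for `x < 0` and `F̄(x) = 1/(⌊x⌋ + 2)` for `x ≥ 0`. -/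
noncomputable def discreteParetoSurvival (x : ℝ) : ℝ :=
  if x < 0 then 1 else 1 / ((⌊x⌋ : ℝ) + 2)

/-!
For `x ≥ 0` the inequality `θ F̄(x) ≤ F̄(x/θ)` reads `θ (⌊x/θ⌋ + 2) ≤ ⌊x⌋ + 2`. For
`m = ⌊x/θ⌋` the left side is fixed while `⌊x⌋ ≥ ⌊mθ⌋`, so it suffices that
`θ (m + 2) ≤ ⌊mθ⌋ + 2` for every integer `m`. This holds when `θ ≤ 1/2`, and when
`θ = p/q` with `2p ≤ q + 1`, because then `q ⌊mp/q⌋ ≥ mp - q + 1`.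

Conversely, let `θ > 1/2`. At `x = (2k+1)θ` the inequality says that
`(2k+1)θ < k+1` forces `(2k+3)θ ≤ k+2`. Starting from `θ < 1`, unless `θ` hits one of
the values `(k+1)/(2k+1)`, induction gives `(2k+1)θ < k+1`, i.e. `k (2θ - 1) < 1 - θ`,
for every `k`, which is impossible.
-/

namespace DiscretePareto

variable {θ : ℝ}

lemma survival_of_nonneg {x : ℝ} (hx : 0 ≤ x) :
    discreteParetoSurvival x = 1 / ((⌊x⌋ : ℝ) + 2) :=
  if_neg hx.not_gt

lemma floor_add_two_pos {x : ℝ} (hx : 0 ≤ x) : (0 : ℝ) < ⌊x⌋ + 2 := by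
  have : (0 : ℝ) ≤ ⌊x⌋ := by exact_mod_cast Int.floor_nonneg.mpr hx
  linarith

lemma mul_survival_le_iff (hθ : 0 < θ) {x : ℝ} (hx : 0 ≤ x) :
    θ * discreteParetoSurvival x ≤ discreteParetoSurvival (x / θ) ↔
      θ * ((⌊x / θ⌋ : ℝ) + 2) ≤ ⌊x⌋ + 2 := by
  have hxθ : 0 ≤ x / θ := div_nonneg hx hθ.le
  rw [survival_of_nonneg hx, survival_of_nonneg hxθ, mul_one_div,
    div_le_div_iff₀ (floor_add_two_pos hx) (floor_add_two_pos hxθ), one_mul]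

lemma mul_floor_div_add_two_le (hθ : 0 < θ)
    (h : ∀ m : ℤ, θ * ((m : ℝ) + 2) ≤ ⌊(m : ℝ) * θ⌋ + 2) (x : ℝ) :
    θ * ((⌊x / θ⌋ : ℝ) + 2) ≤ ⌊x⌋ + 2 := by
  have hmθ : (⌊x / θ⌋ : ℝ) * θ ≤ x :=
    (le_div_iff₀ hθ).mp (Int.floor_le (x / θ))
  have hfloor : ((⌊(⌊x / θ⌋ : ℝ) * θ⌋ : ℤ) : ℝ) ≤ ⌊x⌋ := by
    exact_mod_cast Int.floor_mono hmθ
  linarith [h ⌊x / θ⌋]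

lemma mul_add_two_le_floor_of_le_half (hθ : θ ≤ 1 / 2) (m : ℤ) :
    θ * ((m : ℝ) + 2) ≤ ⌊(m : ℝ) * θ⌋ + 2 := by
  linarith [Int.lt_floor_add_one ((m : ℝ) * θ)]

lemma mul_add_two_le_floor_of_eq_div {p q : ℤ} (hq : 0 < q) (hpq : 2 * p ≤ q + 1)
    (hθ : θ = p / q) (m : ℤ) :
    θ * ((m : ℝ) + 2) ≤ ⌊(m : ℝ) * θ⌋ + 2 := by
  subst hθ
  have hqR : (0 : ℝ) < q := by exact_mod_cast hq
  set n := ⌊(m : ℝ) * (p / q)⌋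
  have hlt : ((m * p : ℤ) : ℝ) < ((q * (n + 1) : ℤ) : ℝ) := by
    have hmpq : (m : ℝ) * p = (m : ℝ) * (p / q) * q := by field_simp
    push_cast
    rw [hmpq, mul_comm (q : ℝ)]
    exact mul_lt_mul_of_pos_right (Int.lt_floor_add_one _) hqR
  have hint : m * p + 1 ≤ q * (n + 1) := Int.cast_lt.mp hlt
  have hintR : ((m : ℝ) * p + 1 ≤ q * (n + 1)) := by exact_mod_cast hint
  have hpqR : (2 * p : ℝ) ≤ q + 1 := by exact_mod_cast hpq
  rw [div_mul_eq_mul_div, div_le_iff₀ hqR]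
  nlinarith

lemma two_mul_add_three_mul_le (h12 : 1 / 2 < θ)
    (h : ∀ x : ℝ, 0 ≤ x → θ * ((⌊x / θ⌋ : ℝ) + 2) ≤ ⌊x⌋ + 2)
    {k : ℕ} (hk : (2 * (k : ℝ) + 1) * θ < k + 1) :
    (2 * (k : ℝ) + 3) * θ ≤ k + 2 := by
  have hθ : 0 < θ := by linarith
  have hx : 0 ≤ (2 * (k : ℝ) + 1) * θ := by positivity
  have hfloor : ⌊(2 * (k : ℝ) + 1) * θ⌋ = k := by
    rw [Int.floor_eq_iff]
    constructor <;> push_cast <;> nlinarith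
  have hdiv : ⌊(2 * (k : ℝ) + 1) * θ / θ⌋ = 2 * k + 1 := by
    rw [mul_div_cancel_right₀ _ hθ.ne', Int.floor_eq_iff]
    push_cast
    constructor <;> linarith
  have := h _ hx
  rw [hfloor, hdiv] at this
  push_cast at this
  linarith

lemma exists_eq_of_half_lt (h12 : 1 / 2 < θ) (hθ1 : θ < 1)
    (h : ∀ x : ℝ, 0 ≤ x → θ * ((⌊x / θ⌋ : ℝ) + 2) ≤ ⌊x⌋ + 2) :
    ∃ k : ℕ, 1 ≤ k ∧ θ = ((k : ℝ) + 1) / (2 * (k : ℝ) + 1) := by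
  by_contra! hne
  have hlt : ∀ k : ℕ, (2 * (k : ℝ) + 1) * θ < k + 1 := by
    intro k
    induction k with
    | zero => simpa using hθ1
    | succ k ih =>
      have hle := two_mul_add_three_mul_le h12 h ih
      have hne' : (2 * ((k + 1 : ℕ) : ℝ) + 1) * θ ≠ (k + 1 : ℕ) + 1 := by
        intro heq
        apply hne (k + 1) (Nat.le_add_left 1 k)
        rw [eq_div_iff (by positivity), mul_comm, heq]
      push_cast at hne' ⊢
      exact lt_of_le_of_ne (by linarith) (by contrapose! hne'; linarith)
  obtain ⟨k, hk⟩ := exists_nat_gt ((1 - θ) / (2 * θ - 1))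
  rw [div_lt_iff₀ (by linarith)] at hk
  linarith [hlt k]

end DiscretePareto

open DiscretePareto in
/-- the shifted discrete Pareto distribution is θ-subscalable if and
only if `θ ∈ (0, 1/2] ∪ {(k+1)/(2k+1) : k ∈ ℕ, k ≥ 1}`. -/
theorem discretePareto_subscalable_iff (θ : ℝ) (hθ : θ ∈ Set.Ioo (0 : ℝ) 1) :
    (∀ x : ℝ, 0 ≤ x →
        θ * discreteParetoSurvival x ≤ discreteParetoSurvival (x / θ)) ↔
      (θ ≤ 1 / 2 ∨ ∃ k : ℕ, 1 ≤ k ∧ θ = ((k : ℝ) + 1) / (2 * (k : ℝ) + 1)) := by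
  obtain ⟨hθ0, hθ1⟩ := hθ
  refine (forall_congr' fun x => imp_congr_right fun hx => mul_survival_le_iff hθ0 hx).trans ?_
  constructor
  · intro h
    rcases le_or_gt θ (1 / 2) with h12 | h12
    · exact Or.inl h12
    · exact Or.inr (exists_eq_of_half_lt h12 hθ1 h)
  · rintro (h12 | ⟨k, -, hk⟩) x -
    · exact mul_floor_div_add_two_le hθ0 (mul_add_two_le_floor_of_le_half h12) x
    · exact mul_floor_div_add_two_le hθ0
        (mul_add_two_le_floor_of_eq_div (p := k + 1) (q := 2 * k + 1) (by omega) (by omega)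
          (by push_cast; exact hk)) x
end

section
/- Let X be a nonnegative completely subscalable random variable with survival function F̄(x) = P(X > x). Then F̄ is continuous on (0, ∞). -/
/-!
Complete subscalability with `θ ↑ 1` forces `P(X ≥ x) ≤ P(X > x)` for every `x > 0`, since
`θ P(X ≥ x) ≤ θ P(X > θ x) ≤ P(X > x)`. Hence the law of `X` has no atoms on `(0, ∞)`, and a
distribution function is continuous wherever the law has no atom.
-/

open MeasureTheory ProbabilityTheory Set

namespace MeasureTheory.Measure

def IsCompletelySubscalable (μ : Measure ℝ) : Prop :=
  ∀ θ ∈ Ioo (0 : ℝ) 1, ∀ x : ℝ, 0 ≤ x → ENNReal.ofReal θ * μ (Ioi x) ≤ μ (Ioi (x / θ))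

namespace IsCompletelySubscalable

variable {μ : Measure ℝ}

theorem measure_Ici_le_measure_Ioi (h : μ.IsCompletelySubscalable) {x : ℝ} (hx : 0 < x) :
    μ (Ici x) ≤ μ (Ioi x) := by
  refine ENNReal.le_of_forall_lt_one_mul_le fun a ha => ?_
  rcases eq_or_ne a 0 with rfl | ha₀
  · simp
  set θ := a.toReal
  have hθ : θ ∈ Ioo (0 : ℝ) 1 :=
    ⟨ENNReal.toReal_pos ha₀ ha.ne_top, ENNReal.toReal_lt_of_lt_ofReal (by simpa using ha)⟩
  have hθx : θ * x < x := mul_lt_of_lt_one_left hx hθ.2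
  calc a * μ (Ici x) = ENNReal.ofReal θ * μ (Ici x) := by rw [ENNReal.ofReal_toReal ha.ne_top]
    _ ≤ ENNReal.ofReal θ * μ (Ioi (θ * x)) := by
      gcongr
    _ ≤ μ (Ioi (θ * x / θ)) := h θ hθ _ (mul_nonneg hθ.1.le hx.le)
    _ = μ (Ioi x) := by rw [mul_div_cancel_left₀ x hθ.1.ne']

theorem measure_singleton_eq_zero [IsFiniteMeasure μ] (h : μ.IsCompletelySubscalable) {x : ℝ}
    (hx : 0 < x) : μ {x} = 0 := by
  have hsplit : μ {x} + μ (Ioi x) = μ (Ici x) := by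
    rw [← measure_union (by simp) measurableSet_Ioi, singleton_union, Ioi_insert]
  have hle : μ {x} + μ (Ioi x) ≤ 0 + μ (Ioi x) := by
    rw [zero_add, hsplit]; exact h.measure_Ici_le_measure_Ioi hx
  exact nonpos_iff_eq_zero.mp ((ENNReal.add_le_add_iff_right (measure_ne_top _ _)).mp hle)

end IsCompletelySubscalable

end MeasureTheory.Measure

namespace ProbabilityTheory

variable (μ : Measure ℝ) [IsProbabilityMeasure μ]

theorem continuousAt_cdf_of_measure_singleton_eq_zero {x : ℝ} (hx : μ {x} = 0) :
    ContinuousAt (cdf μ) x := by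
  have hjump : ENNReal.ofReal (cdf μ x - Function.leftLim (cdf μ) x) = 0 := by
    rw [← StieltjesFunction.measure_singleton, measure_cdf, hx]
  rw [(monotone_cdf μ).continuousAt_iff_leftLim_eq_rightLim, (cdf μ).rightLim_eq]
  linarith [ENNReal.ofReal_eq_zero.mp hjump, (monotone_cdf μ).leftLim_le (le_refl x)]

theorem measureReal_Ioi_eq_one_sub_cdf (x : ℝ) : μ.real (Ioi x) = 1 - cdf μ x := by
  rw [cdf_eq_real, ← compl_Iic, probReal_compl_eq_one_sub measurableSet_Iic]

theorem continuousAt_measureReal_Ioi_of_measure_singleton_eq_zero {x : ℝ} (hx : μ {x} = 0) :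
    ContinuousAt (fun y => μ.real (Ioi y)) x := by
  simp_rw [measureReal_Ioi_eq_one_sub_cdf]
  exact continuousAt_const.sub (continuousAt_cdf_of_measure_singleton_eq_zero μ hx)

end ProbabilityTheory

theorem completelySubscalable_survival_continuous_general
    {Ω : Type*} [MeasurableSpace Ω] (P : Measure Ω) [IsProbabilityMeasure P]
    (X : Ω → ℝ) (hXmeas : Measurable X)
    (hsub : ∀ θ : ℝ, θ ∈ Set.Ioo (0 : ℝ) 1 → ∀ x : ℝ, 0 ≤ x →
      ENNReal.ofReal θ * P {ω | X ω > x} ≤ P {ω | X ω > x / θ}) :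
    ContinuousOn (fun x : ℝ => (P {ω | X ω > x}).toReal) (Set.Ioi 0) := by
  have : IsProbabilityMeasure (P.map X) := Measure.isProbabilityMeasure_map hXmeas.aemeasurable
  have hlaw : ∀ x, P {ω | X ω > x} = P.map X (Ioi x) := fun x => by
    rw [Measure.map_apply hXmeas measurableSet_Ioi]; rfl
  have hsubLaw : (P.map X).IsCompletelySubscalable := fun θ hθ x hx => by
    simpa only [hlaw] using hsub θ hθ x hx
  simp_rw [hlaw]
  exact fun x hx => (continuousAt_measureReal_Ioi_of_measure_singleton_eq_zero _
    (hsubLaw.measure_singleton_eq_zero hx)).continuousWithinAt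

/-- the survival function of a nonnegative completely subscalable
random variable is continuous on `(0, ∞)`. -/
theorem completelySubscalable_survival_continuous
    {Ω : Type*} [MeasurableSpace Ω] (P : Measure Ω) [IsProbabilityMeasure P]
    (X : Ω → ℝ) (hXmeas : Measurable X) (hXpos : ∀ ω, 0 ≤ X ω)
    (hsub : ∀ θ : ℝ, θ ∈ Set.Ioo (0 : ℝ) 1 → ∀ x : ℝ, 0 ≤ x →
      ENNReal.ofReal θ * P {ω | X ω > x} ≤ P {ω | X ω > x / θ}) :
    ContinuousOn (fun x : ℝ => (P {ω | X ω > x}).toReal) (Set.Ioi 0) :=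
  completelySubscalable_survival_continuous_general P X hXmeas hsub
end

section
/- Let X be a nonnegative completely subscalable random variable, and let g : [0,∞) → [0,∞) be a monotone increasing convex function with g(0) = 0. Then the random variable Y := g(X) is also completely subscalable. -/
open MeasureTheory

/-- an increasing convex transformation anchored at zero of a
completely subscalable nonnegative random variable is completely subscalable. -/
theorem completelySubscalable_comp_convex
    {Ω : Type*} [MeasurableSpace Ω] (P : Measure Ω) [IsProbabilityMeasure P]
    (X : Ω → ℝ) (hXmeas : Measurable X) (hXpos : ∀ ω, 0 ≤ X ω)
    (hsub : ∀ θ : ℝ, θ ∈ Set.Ioo (0 : ℝ) 1 → ∀ x : ℝ, 0 ≤ x →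
      ENNReal.ofReal θ * P {ω | X ω > x} ≤ P {ω | X ω > x / θ})
    (g : ℝ → ℝ) (hg_mono : MonotoneOn g (Set.Ici 0))
    (hg_conv : ConvexOn ℝ (Set.Ici 0) g)
    (hg_nonneg : ∀ x : ℝ, 0 ≤ x → 0 ≤ g x)
    (hg_zero : g 0 = 0) :
    ∀ θ : ℝ, θ ∈ Set.Ioo (0 : ℝ) 1 → ∀ x : ℝ, 0 ≤ x →
      ENNReal.ofReal θ * P {ω | g (X ω) > x} ≤ P {ω | g (X ω) > x / θ} := by
  intro θ hθ x hx
  obtain ⟨hθ0, hθ1⟩ := hθ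
  -- key convexity inequality: g t ≤ θ * g (t/θ) for t ≥ 0
  have key : ∀ t : ℝ, 0 ≤ t → g t ≤ θ * g (t / θ) := by
    intro t ht
    have h2 : t / θ ∈ Set.Ici (0:ℝ) := Set.mem_Ici.2 (div_nonneg ht hθ0.le)
    have h3 := hg_conv.2 h2 (Set.mem_Ici.2 le_rfl) hθ0.le (by linarith : (0:ℝ) ≤ 1 - θ) (by ring)
    have h4 : θ * (t / θ) = t := by field_simp
    simp only [smul_eq_mul, mul_zero, add_zero, hg_zero, h4] at h3
    linarith
  -- key consequence: if θ * X ω > some t with g t > x, then g (X ω) > x / θ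
  have key2 : ∀ ω, x < g (θ * X ω) → g (X ω) > x / θ := by
    intro ω h
    have h1 : g (θ * X ω) ≤ θ * g ((θ * X ω) / θ) := key _ (mul_nonneg hθ0.le (hXpos ω))
    have h2 : (θ * X ω) / θ = X ω := by field_simp
    rw [h2] at h1
    rw [gt_iff_lt, div_lt_iff₀ hθ0]
    linarith
  by_cases hex : ∃ t : ℝ, 0 ≤ t ∧ x < g t
  · obtain ⟨t0, ht0, hgt0⟩ := hex
    set S : Set ℝ := {t : ℝ | 0 ≤ t ∧ g t ≤ x} with hS
    have h0S : (0:ℝ) ∈ S := ⟨le_rfl, by rw [hg_zero]; exact hx⟩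
    have hbdd : BddAbove S := by
      refine ⟨t0, fun t ht => ?_⟩
      by_contra hc
      push_neg at hc
      exact absurd (hg_mono (Set.mem_Ici.2 ht0) (Set.mem_Ici.2 ht.1) hc.le)
        (by linarith [ht.2])
    set s : ℝ := sSup S with hs
    have hs0 : 0 ≤ s := le_csSup hbdd h0S
    have fact1 : ∀ t : ℝ, 0 ≤ t → s < t → x < g t := by
      intro t ht hst
      by_contra hc
      push_neg at hc
      exact absurd (le_csSup hbdd ⟨ht, hc⟩) (not_le.2 hst)
    have fact2 : ∀ t : ℝ, 0 ≤ t → t < s → g t ≤ x := by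
      intro t ht hts
      obtain ⟨u, huS, htu⟩ := exists_lt_of_lt_csSup ⟨0, h0S⟩ hts
      exact le_trans (hg_mono (Set.mem_Ici.2 ht) (Set.mem_Ici.2 huS.1) htu.le) huS.2
    by_cases hgs : g s ≤ x
    · -- Case B: {gX > x} ⊆ {X > s} and {X > s/θ} ⊆ {gX > x/θ}
      have incl1 : {ω | g (X ω) > x} ⊆ {ω | X ω > s} := by
        intro ω hω
        simp only [Set.mem_setOf_eq] at hω ⊢
        by_contra hc
        push_neg at hc
        exact absurd (le_trans (hg_mono (Set.mem_Ici.2 (hXpos ω)) (Set.mem_Ici.2 hs0) hc) hgs)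
          (not_le.2 hω)
      have incl2 : {ω | X ω > s / θ} ⊆ {ω | g (X ω) > x / θ} := by
        intro ω hω
        simp only [Set.mem_setOf_eq] at hω ⊢
        have h1 : s < θ * X ω := by
          rw [gt_iff_lt, div_lt_iff₀ hθ0] at hω; linarith [hω]
        exact key2 ω (fact1 _ (mul_nonneg hθ0.le (hXpos ω)) h1)
      calc ENNReal.ofReal θ * P {ω | g (X ω) > x}
          ≤ ENNReal.ofReal θ * P {ω | X ω > s} := by
            exact mul_le_mul_right (measure_mono incl1) _
        _ ≤ P {ω | X ω > s / θ} := hsub θ ⟨hθ0, hθ1⟩ s hs0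
        _ ≤ P {ω | g (X ω) > x / θ} := measure_mono incl2
    · -- Case A: g s > x
      push_neg at hgs
      have hspos : 0 < s := by
        rcases lt_or_eq_of_le hs0 with h | h
        · exact h
        · exfalso; rw [← h, hg_zero] at hgs; exact absurd hgs (not_lt.2 hx)
      have incl1 : {ω | g (X ω) > x} ⊆ {ω | X ω ≥ s} := by
        intro ω hω
        simp only [Set.mem_setOf_eq] at hω ⊢
        by_contra hc
        push_neg at hc
        exact absurd (fact2 _ (hXpos ω) hc) (not_le.2 hω)
      have incl2 : {ω | X ω ≥ s / θ} ⊆ {ω | g (X ω) > x / θ} := by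
        intro ω hω
        simp only [Set.mem_setOf_eq] at hω ⊢
        have h1 : s ≤ θ * X ω := by
          rw [ge_iff_le, div_le_iff₀ hθ0] at hω; linarith [hω]
        have h2 : x < g (θ * X ω) :=
          lt_of_lt_of_le hgs (hg_mono (Set.mem_Ici.2 hs0)
            (Set.mem_Ici.2 (mul_nonneg hθ0.le (hXpos ω))) h1)
        exact key2 ω h2
      -- approximating sequence
      set t : ℕ → ℝ := fun n => max (s - 1/(n+1)) 0 with ht
      have htnonneg : ∀ n, 0 ≤ t n := fun n => le_max_right _ _
      have htlt : ∀ n, t n < s := by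
        intro n
        apply max_lt _ hspos
        have : (0:ℝ) < 1/(n+1) := by positivity
        linarith
      have htmono : Monotone t := by
        intro m n hmn
        apply max_le_max_right
        have h1 : (1:ℝ)/(n+1) ≤ 1/(m+1) := by
          apply one_div_le_one_div_of_le (by positivity)
          have := (Nat.cast_le (α := ℝ)).2 hmn
          linarith
        linarith
      have httend : Filter.Tendsto t Filter.atTop (nhds s) := by
        have h1 : Filter.Tendsto (fun n : ℕ => s - 1/(n+1)) Filter.atTop (nhds s) := by
          have h2 : Filter.Tendsto (fun n : ℕ => (1:ℝ)/(n+1)) Filter.atTop (nhds 0) :=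
            tendsto_one_div_add_atTop_nhds_zero_nat
          have := Filter.Tendsto.sub (tendsto_const_nhds (x := s)) h2
          simpa using this
        have h3 : Filter.Tendsto (fun _ : ℕ => (0:ℝ)) Filter.atTop (nhds 0) := tendsto_const_nhds
        have := h1.max h3
        simpa [max_eq_left hs0] using this.congr' (by rfl)
      -- the intersection of {X > t n / θ} over n is {X ≥ s / θ}
      have hinter : (⋂ n, {ω | X ω > t n / θ}) = {ω | X ω ≥ s / θ} := by
        ext ω
        simp only [Set.mem_iInter, Set.mem_setOf_eq]
        constructor
        · intro h
          have hle : ∀ n, t n / θ ≤ X ω := fun n => (h n).le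
          have : Filter.Tendsto (fun n => t n / θ) Filter.atTop (nhds (s / θ)) :=
            httend.div_const θ
          exact le_of_tendsto this (Filter.Eventually.of_forall hle)
        · intro h n
          calc t n / θ < s / θ := by gcongr; exact htlt n
            _ ≤ X ω := h
      have hmeasn : ∀ n, MeasurableSet {ω | X ω > t n / θ} :=
        fun n => measurableSet_lt measurable_const hXmeas
      have hanti : Antitone (fun n => {ω | X ω > t n / θ}) := by
        intro m n hmn ω hω
        simp only [Set.mem_setOf_eq] at hω ⊢
        have : t m / θ ≤ t n / θ := by gcongr; exact htmono hmn
        exact lt_of_le_of_lt this hω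
      have heq : P {ω | X ω ≥ s / θ} = ⨅ n, P {ω | X ω > t n / θ} := by
        rw [← hinter]
        exact hanti.measure_iInter (fun n => (hmeasn n).nullMeasurableSet)
          ⟨0, measure_ne_top P _⟩
      calc ENNReal.ofReal θ * P {ω | g (X ω) > x}
          ≤ ENNReal.ofReal θ * P {ω | X ω ≥ s} :=
            mul_le_mul_right (measure_mono incl1) _
        _ ≤ ⨅ n, P {ω | X ω > t n / θ} := by
            refine le_iInf fun n => ?_
            calc ENNReal.ofReal θ * P {ω | X ω ≥ s}
                ≤ ENNReal.ofReal θ * P {ω | X ω > t n} := by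
                  refine mul_le_mul_right (measure_mono ?_) _
                  intro ω hω
                  simp only [Set.mem_setOf_eq] at hω ⊢
                  exact lt_of_lt_of_le (htlt n) hω
              _ ≤ P {ω | X ω > t n / θ} := hsub θ ⟨hθ0, hθ1⟩ (t n) (htnonneg n)
        _ = P {ω | X ω ≥ s / θ} := heq.symm
        _ ≤ P {ω | g (X ω) > x / θ} := measure_mono incl2
  · -- no t with g t > x: the left set is empty
    push_neg at hex
    have : {ω | g (X ω) > x} = ∅ := by
      ext ω
      simp only [Set.mem_setOf_eq, Set.mem_empty_iff_false, iff_false, not_lt]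
      exact hex _ (hXpos ω)
    rw [this]
    simp
end

section
/- The Fréchet(1) distribution is completely subscalable: if F̄ is defined by F̄(x) = 1 − e^{−1/x} for x > 0 and F̄(x) = 1 for x ≤ 0, then θ·F̄(x) ≤ F̄(x/θ) for all x ≥ 0 and all θ ∈ (0,1). -/
/-- Survival function of the Fréchet(1) distribution:
`F̄(x) = 1 - e^{-1/x}` for `x > 0` and `F̄(x) = 1` for `x ≤ 0`. -/
noncomputable def frechetSurvival (x : ℝ) : ℝ :=
  if 0 < x then 1 - Real.exp (-1 / x) else 1

/-!
For `x > 0`, `F̄(x) = g(1/x)` with `g(u) = 1 - e^{-u}`, and rescaling `x` to `x/θ` rescales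
`1/x` to `θ/x`. Since `g` is concave with `g(0) = 0`, it satisfies `θ g(u) ≤ g(θ u)` for
`θ ∈ [0, 1]`.
-/

open Real

theorem ConcaveOn.smul_le_apply_smul {𝕜 E β : Type*} [Ring 𝕜] [PartialOrder 𝕜] [IsOrderedRing 𝕜]
    [AddCommMonoid E] [Module 𝕜 E] [AddCommMonoid β] [PartialOrder β] [IsOrderedAddMonoid β]
    [Module 𝕜 β] [PosSMulMono 𝕜 β] {s : Set E} {f : E → β} (hf : ConcaveOn 𝕜 s f)
    (h₀ : (0 : E) ∈ s) (hf₀ : 0 ≤ f 0) {x : E} (hx : x ∈ s) {θ : 𝕜} (hθ₀ : 0 ≤ θ) (hθ₁ : θ ≤ 1) :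
    θ • f x ≤ f (θ • x) := by
  have h := hf.2 h₀ hx (sub_nonneg.2 hθ₁) hθ₀ (sub_add_cancel 1 θ)
  rw [smul_zero, zero_add] at h
  exact (le_add_of_nonneg_left (smul_nonneg (sub_nonneg.2 hθ₁) hf₀)).trans h

theorem concaveOn_one_sub_exp_neg : ConcaveOn ℝ Set.univ fun u : ℝ => 1 - exp (-u) :=
  (concaveOn_const 1 convex_univ).sub (convexOn_exp.comp_linearMap (-LinearMap.id))

theorem frechetSurvival_of_pos {x : ℝ} (hx : 0 < x) : frechetSurvival x = 1 - exp (-x⁻¹) := by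
  rw [frechetSurvival, if_pos hx, neg_div, one_div]

/-- the Fréchet(1) distribution is completely subscalable. -/
theorem frechet_completelySubscalable :
    ∀ θ : ℝ, θ ∈ Set.Ioo (0 : ℝ) 1 → ∀ x : ℝ, 0 ≤ x →
      θ * frechetSurvival x ≤ frechetSurvival (x / θ) := by
  rintro θ ⟨hθ₀, hθ₁⟩ x hx
  rcases hx.eq_or_lt with rfl | hx
  · simp [frechetSurvival, hθ₁.le]
  · rw [frechetSurvival_of_pos hx, frechetSurvival_of_pos (div_pos hx hθ₀), inv_div,
      div_eq_mul_inv]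
    simpa only [smul_eq_mul] using concaveOn_one_sub_exp_neg.smul_le_apply_smul
      (Set.mem_univ 0) (by simp) (Set.mem_univ x⁻¹) hθ₀.le hθ₁.le
end

section
/- Every super-Fréchet random variable is completely subscalable: if X is Fréchet(1)-distributed (i.e., P(X > x) = 1 − e^{−1/x} for x > 0) and g* : [0,∞) → [0,∞) is a strictly increasing convex function with g*(0) = 0, then Y := g*(X) satisfies θ·P(Y > x) ≤ P(Y > x/θ) for all x ≥ 0 and all θ ∈ (0,1). -/
open MeasureTheory

theorem concave_ineq (θ u : ℝ) (hθ : θ ∈ Set.Ioo (0:ℝ) 1) (hu : 0 < u) :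
    θ * (1 - Real.exp (-u)) < 1 - Real.exp (-(θ*u)) := by
  have h1θ : (0:ℝ) < 1 - θ := by linarith [hθ.2]
  have h := strictConvexOn_exp.2 (Set.mem_univ (-u)) (Set.mem_univ (0:ℝ))
    (by intro h; simp at h; linarith) hθ.1 h1θ (by ring)
  simp only [smul_eq_mul, mul_zero, add_zero, Real.exp_zero, mul_one] at h
  have e : θ * -u = -(θ*u) := by ring
  rw [e] at h
  linarith

/-- every super-Fréchet random variable is completely subscalable. -/
theorem superFrechet_completelySubscalable
    {Ω : Type*} [MeasurableSpace Ω] (P : Measure Ω) [IsProbabilityMeasure P]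
    (X : Ω → ℝ) (hXmeas : Measurable X)
    (hXfrechet : ∀ x : ℝ, 0 < x →
      P {ω | X ω > x} = ENNReal.ofReal (1 - Real.exp (-1 / x)))
    (hXfrechet' : ∀ x : ℝ, x ≤ 0 → P {ω | X ω > x} = 1)
    (g : ℝ → ℝ) (hg_mono : StrictMonoOn g (Set.Ici 0))
    (hg_conv : ConvexOn ℝ (Set.Ici 0) g)
    (hg_nonneg : ∀ x : ℝ, 0 ≤ x → 0 ≤ g x)
    (hg_zero : g 0 = 0) :
    ∀ θ : ℝ, θ ∈ Set.Ioo (0 : ℝ) 1 → ∀ x : ℝ, 0 ≤ x →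
      ENNReal.ofReal θ * P {ω | g (X ω) > x} ≤ P {ω | g (X ω) > x / θ} := by
  intro θ hθ x hx
  obtain ⟨hθ0, hθ1⟩ := hθ
  rcases eq_or_lt_of_le hx with h0 | hxpos
  · -- x = 0 : the two sets coincide and ofReal θ ≤ 1
    rw [← h0, zero_div]
    calc ENNReal.ofReal θ * P {ω | g (X ω) > 0}
        ≤ 1 * P {ω | g (X ω) > 0} := by
          gcongr
          exact ENNReal.ofReal_le_one.2 hθ1.le
      _ = P {ω | g (X ω) > 0} := one_mul _
  -- now 0 < x
  have hg1 : 0 < g 1 := by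
    have := hg_mono (Set.mem_Ici.2 le_rfl) (Set.mem_Ici.2 zero_le_one) one_pos
    rwa [hg_zero] at this
  -- convexity scaling: g (c * t) ≤ c * g t for c ∈ [0,1], t ≥ 0
  have hcvx : ∀ c t : ℝ, 0 ≤ c → c ≤ 1 → 0 ≤ t → g (c * t) ≤ c * g t := by
    intro c t hc hc1 ht
    have h := hg_conv.2 (Set.mem_Ici.2 ht) (Set.mem_Ici.2 le_rfl) hc
      (by linarith : (0:ℝ) ≤ 1 - c) (by ring)
    simpa [hg_zero] using h
  -- growth : g t ≥ t * g 1 for t ≥ 1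
  have hgrow : ∀ t : ℝ, 1 ≤ t → t * g 1 ≤ g t := by
    intro t ht
    have ht0 : 0 < t := lt_of_lt_of_le one_pos ht
    have h := hcvx (1/t) t (by positivity) (by rw [div_le_one ht0]; exact ht) ht0.le
    rw [one_div_mul_cancel ht0.ne'] at h
    calc t * g 1 ≤ t * ((1/t) * g t) := by gcongr
      _ = g t := by field_simp
  set A : Set ℝ := {t : ℝ | 0 < t ∧ x < g t} with hA
  have hA_ne : A.Nonempty := by
    refine ⟨max 1 ((x+1)/g 1), lt_of_lt_of_le one_pos (le_max_left _ _), ?_⟩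
    have h1 : (x+1)/g 1 * g 1 ≤ max 1 ((x+1)/g 1) * g 1 := by
      gcongr; exact le_max_right _ _
    rw [div_mul_cancel₀ _ hg1.ne'] at h1
    have h2 := hgrow _ (le_max_left 1 ((x+1)/g 1))
    linarith
  set c : ℝ := min 1 (x / (2 * g 1)) with hc
  have hc0 : 0 < c := lt_min one_pos (by positivity)
  have hc_lb : ∀ s ∈ A, c ≤ s := by
    intro s hs
    by_contra hlt
    push_neg at hlt
    have hs1 : s ≤ 1 := le_of_lt (lt_of_lt_of_le hlt (min_le_left _ _))
    have h1 : g s ≤ s * g 1 := by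
      have := hcvx s 1 hs.1.le hs1 zero_le_one
      simpa using this
    have h2 : s * g 1 < c * g 1 := by gcongr
    have h3 : c * g 1 ≤ (x / (2 * g 1)) * g 1 := by
      gcongr; exact min_le_right _ _
    rw [div_mul_eq_mul_div, mul_comm (2:ℝ) (g 1), ← div_div,
      mul_div_cancel_right₀ _ hg1.ne'] at h3
    have := hs.2
    linarith
  set a : ℝ := sInf A with ha
  have hA_bdd : BddBelow A := ⟨c, hc_lb⟩
  have ha_pos : 0 < a := lt_of_lt_of_le hc0 (le_csInf hA_ne hc_lb)
  -- inclusion 1 : g t > x with t > 0 implies a ≤ t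
  have hincl1 : ∀ t : ℝ, 0 < t → x < g t → a ≤ t := fun t ht hgt =>
    csInf_le hA_bdd ⟨ht, hgt⟩
  -- inclusion 2 : t > a/θ implies g t > x/θ
  have hincl2 : ∀ t : ℝ, a / θ < t → x / θ < g t := by
    intro t htθ
    have ht0 : 0 < t := lt_trans (by positivity) htθ
    have hat : a < θ * t := by
      rw [div_lt_iff₀ hθ0] at htθ; linarith [htθ]
    obtain ⟨s, hsA, hst⟩ := exists_lt_of_csInf_lt hA_ne hat
    have hgs : x < g s := hsA.2
    have hmono : g s < g (θ * t) :=
      hg_mono (Set.mem_Ici.2 hsA.1.le) (Set.mem_Ici.2 (by positivity)) hst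
    have hsc : g (θ * t) ≤ θ * g t := hcvx θ t hθ0.le hθ1.le ht0.le
    rw [div_lt_iff₀ hθ0]
    calc x < g (θ * t) := lt_trans hgs hmono
      _ ≤ θ * g t := hsc
      _ = g t * θ := mul_comm _ _
  -- P (X ≤ 0) = 0
  have hP0 : P {ω | X ω ≤ 0} = 0 := by
    have h1 := hXfrechet' 0 le_rfl
    have hms : MeasurableSet {ω | X ω > 0} := hXmeas measurableSet_Ioi
    have hcompl : {ω | X ω ≤ 0} = {ω | X ω > 0}ᶜ := by
      ext ω; simp [not_lt]
    rw [hcompl, measure_compl hms (measure_ne_top _ _), h1, measure_univ,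
      tsub_self]
  -- upper bound
  have hupper : ∀ b : ℝ, 0 < b → b < a →
      P {ω | g (X ω) > x} ≤ ENNReal.ofReal (1 - Real.exp (-1 / b)) := by
    intro b hb0 hba
    have hsub : {ω | g (X ω) > x} ⊆ {ω | X ω > b} ∪ {ω | X ω ≤ 0} := by
      intro ω hω
      rcases le_or_gt (X ω) 0 with h | h
      · exact Or.inr h
      · exact Or.inl (lt_of_lt_of_le hba (hincl1 _ h hω))
    calc P {ω | g (X ω) > x} ≤ P ({ω | X ω > b} ∪ {ω | X ω ≤ 0}) :=
          measure_mono hsub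
      _ ≤ P {ω | X ω > b} + P {ω | X ω ≤ 0} := measure_union_le _ _
      _ = ENNReal.ofReal (1 - Real.exp (-1 / b)) := by
          rw [hXfrechet b hb0, hP0, add_zero]
  -- lower bound
  have haθ : 0 < a / θ := by positivity
  have hlower : ENNReal.ofReal (1 - Real.exp (-(θ * (1/a)))) ≤
      P {ω | g (X ω) > x / θ} := by
    have hsub : {ω | X ω > a / θ} ⊆ {ω | g (X ω) > x / θ} :=
      fun ω hω => hincl2 _ hω
    have heq : (-1 : ℝ) / (a / θ) = -(θ * (1/a)) := by
      field_simp
    calc ENNReal.ofReal (1 - Real.exp (-(θ * (1/a))))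
        = P {ω | X ω > a / θ} := by rw [hXfrechet _ haθ, heq]
      _ ≤ P {ω | g (X ω) > x / θ} := measure_mono hsub
  -- strict concavity inequality, and choose b < a by continuity
  have hkey : θ * (1 - Real.exp (-(1/a))) < 1 - Real.exp (-(θ * (1/a))) :=
    concave_ineq θ (1/a) ⟨hθ0, hθ1⟩ (by positivity)
  have hcont : ContinuousAt (fun b : ℝ => θ * (1 - Real.exp (-(1/b)))) a := by
    fun_prop (disch := exact ha_pos.ne')
  have hev1 : ∀ᶠ b in nhds a, θ * (1 - Real.exp (-(1/b))) <
      1 - Real.exp (-(θ * (1/a))) := hcont.eventually_lt_const hkey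
  have hev2 : ∀ᶠ b in nhds a, 0 < b := eventually_gt_nhds ha_pos
  have hev : ∀ᶠ b in nhdsWithin a (Set.Iio a),
      (θ * (1 - Real.exp (-(1/b))) < 1 - Real.exp (-(θ * (1/a))) ∧ 0 < b)
        ∧ b < a := by
    refine Filter.Eventually.and ?_ ?_
    · exact (hev1.and hev2).filter_mono nhdsWithin_le_nhds
    · exact eventually_mem_nhdsWithin
  obtain ⟨b, ⟨hbφ, hb0⟩, hba⟩ := hev.exists
  -- final chain
  calc ENNReal.ofReal θ * P {ω | g (X ω) > x}
      ≤ ENNReal.ofReal θ * ENNReal.ofReal (1 - Real.exp (-1 / b)) := by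
        gcongr
        exact hupper b hb0 hba
    _ = ENNReal.ofReal (θ * (1 - Real.exp (-(1/b)))) := by
        rw [← ENNReal.ofReal_mul hθ0.le, neg_div, one_div]
    _ ≤ ENNReal.ofReal (1 - Real.exp (-(θ * (1/a)))) :=
        ENNReal.ofReal_le_ofReal hbφ.le
    _ ≤ P {ω | g (X ω) > x / θ} := hlower
end

section
/- Let X_1, …, X_n (n ≥ 2) be mutually independent nonnegative random variables with survival functions F̄_1, …, F̄_n, and let θ = (θ_1, …, θ_n) ∈ Δ_n. Then there exists t > 0 such that for all x ∈ [0, t), θ_1 P(X_1 > x) + ⋯ + θ_n P(X_n > x) ≤ P(θ_1 X_1 + ⋯ + θ_n X_n > x); in other words, the survival function of the Categorical(θ) mixture I_1 X_1 + ⋯ + I_n X_n (with I independent of the X_i) is bounded above by that of the weighted average θ_1 X_1 + ⋯ + θ_n X_n on a non-trivial interval [0, t) near the origin. -/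
/-!
Write `F i` for the distribution function of `X i` and `G` for that of `S = ∑ i, θ i * X i`; the
claim is `G x ≤ ∑ i, θ i * F i x` for small `x ≥ 0`. Since `S ≤ 0` forces every `X i ≤ 0`,
independence gives `G 0 ≤ ∏ i, F i 0`, which is strictly below `∑ i, θ i * F i 0` unless the
`F i 0` are all `0` or all `1`; in the strict case right-continuity of `G` concludes, and the
all-`1` case is trivial. If all `F i 0 = 0`, then `S ≤ x` forces `X k ≤ x` for some `k` together
with `X j ≤ x / θ j` for any other `j`, so `G x ≤ ∑ k, F k x * F j (x / θ j)`, and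
`F j (x / θ j) ≤ θ k` for small `x` by right-continuity of `F j` at `0`.
-/

open MeasureTheory ProbabilityTheory Filter Finset
open scoped ENNReal Topology

section WeightedMean

variable {ι : Type*} [Fintype ι]

theorem exists_prod_lt_of_mem_Icc [Nontrivial ι] {e : ι → ℝ} (he0 : ∀ i, 0 ≤ e i)
    (he1 : ∀ i, e i ≤ 1) (hne0 : ∃ i, e i ≠ 0) (hne1 : ∃ i, e i ≠ 1) :
    ∃ k, ∏ i, e i < e k := by
  by_cases hzero : ∃ a, e a = 0
  · obtain ⟨a, ha⟩ := hzero
    obtain ⟨k, hk⟩ := hne0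
    exact ⟨k, by rw [prod_eq_zero (mem_univ a) ha]; exact (he0 k).lt_of_ne' hk⟩
  · push Not at hzero
    obtain ⟨i, hi⟩ := hne1
    obtain ⟨k, hki⟩ := exists_ne i
    refine ⟨k, ?_⟩
    classical
    calc ∏ j, e j ≤ ∏ j ∈ {k, i}, e j :=
          prod_le_prod_of_subset_of_le_one (subset_univ _) (fun j _ => he0 j) fun j _ _ => he1 j
      _ = e k * e i := prod_pair hki
      _ < e k * 1 := mul_lt_mul_of_pos_left ((he1 i).lt_of_ne hi) ((he0 k).lt_of_ne' (hzero k))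
      _ = e k := mul_one _

theorem prod_lt_sum_mul [Nontrivial ι] {θ e : ι → ℝ} (hθ : ∀ i, 0 < θ i) (hθsum : ∑ i, θ i = 1)
    (he0 : ∀ i, 0 ≤ e i) (he1 : ∀ i, e i ≤ 1) (hne0 : ∃ i, e i ≠ 0) (hne1 : ∃ i, e i ≠ 1) :
    ∏ i, e i < ∑ i, θ i * e i := by
  obtain ⟨k, hk⟩ := exists_prod_lt_of_mem_Icc he0 he1 hne0 hne1
  have hprod_le : ∀ i, ∏ j, e j ≤ e i := fun i => by
    simpa using prod_le_prod_of_subset_of_le_one (subset_univ {i}) (fun j _ => he0 j)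
      fun j _ _ => he1 j
  calc ∏ j, e j = ∑ i, θ i * ∏ j, e j := by rw [← sum_mul, hθsum, one_mul]
    _ < ∑ i, θ i * e i := sum_lt_sum (fun i _ => mul_le_mul_of_nonneg_left (hprod_le i) (hθ i).le)
          ⟨k, mem_univ k, mul_lt_mul_of_pos_left hk (hθ k)⟩

theorem le_div_of_sum_mul_le {θ y : ι → ℝ} {x : ℝ} (hθ : ∀ i, 0 < θ i) (hy : ∀ i, 0 ≤ y i)
    (h : ∑ i, θ i * y i ≤ x) (j : ι) : y j ≤ x / θ j := by
  rw [le_div_iff₀' (hθ j)]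
  exact (single_le_sum (fun i _ => mul_nonneg (hθ i).le (hy i)) (mem_univ j)).trans h

theorem exists_le_of_sum_mul_le {θ y : ι → ℝ} {x : ℝ} (hθ : ∀ i, 0 < θ i)
    (hθsum : ∑ i, θ i = 1) (h : ∑ i, θ i * y i ≤ x) : ∃ k, y k ≤ x := by
  have hne : (univ : Finset ι).Nonempty := univ_nonempty_iff.2 <| by
    by_contra hempty
    simp [not_nonempty_iff.1 hempty] at hθsum
  obtain ⟨k, -, hk⟩ := exists_le_of_sum_le hne <| h.trans_eq (by rw [← sum_mul, hθsum, one_mul] :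
    x = ∑ i, θ i * x)
  exact ⟨k, le_of_mul_le_mul_left hk (hθ k)⟩

end WeightedMean

namespace StieltjesFunction

variable {ι : Type*} [Fintype ι] {θ : ι → ℝ}

theorem eventually_le_sum_mul_of_lt {a : ℝ} (F : ι → StieltjesFunction ℝ)
    (G : StieltjesFunction ℝ) (hθ : ∀ i, 0 ≤ θ i) (ha : G a < ∑ i, θ i * F i a) :
    ∀ᶠ x in 𝓝[≥] a, G x ≤ ∑ i, θ i * F i x := by
  filter_upwards [(G.right_continuous a).tendsto.eventually_lt_const ha, self_mem_nhdsWithin]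
    with x hGx hx
  refine hGx.le.trans (sum_le_sum fun i _ => ?_)
  exact mul_le_mul_of_nonneg_left ((F i).mono hx) (hθ i)

theorem eventually_le_sum_mul_of_eq_zero (F : ι → StieltjesFunction ℝ) (G : StieltjesFunction ℝ)
    (hθ : ∀ i, 0 < θ i) (hF : ∀ i x, 0 ≤ F i x) (hF0 : ∀ i, F i 0 = 0) (σ : ι → ι)
    (hG : ∀ x, 0 ≤ x → G x ≤ ∑ k, F k x * F (σ k) (x / θ (σ k))) :
    ∀ᶠ x in 𝓝[≥] 0, G x ≤ ∑ i, θ i * F i x := by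
  have hsmall : ∀ j k, ∀ᶠ x in 𝓝[≥] (0 : ℝ), F j (x / θ j) < θ k := fun j k => by
    have hcont : ContinuousWithinAt (fun x => F j (x / θ j)) (Set.Ici 0) 0 :=
      ((F j).right_continuous 0).comp_of_eq (continuousWithinAt_id.div_const _)
        (fun x (hx : 0 ≤ x) => div_nonneg hx (hθ j).le) (zero_div _)
    exact hcont.tendsto.eventually_lt_const (by simpa [hF0] using hθ k)
  filter_upwards [eventually_all.2 fun j => eventually_all.2 (hsmall j), self_mem_nhdsWithin]
    with x hx hx0
  calc G x ≤ ∑ k, F k x * F (σ k) (x / θ (σ k)) := hG x hx0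
    _ ≤ ∑ k, F k x * θ k := sum_le_sum fun k _ => mul_le_mul_of_nonneg_left (hx _ _).le (hF k x)
    _ = ∑ k, θ k * F k x := sum_congr rfl fun k _ => mul_comm _ _

theorem eventually_le_sum_mul [Nontrivial ι] (F : ι → StieltjesFunction ℝ)
    (G : StieltjesFunction ℝ) (hθ : ∀ i, 0 < θ i) (hθsum : ∑ i, θ i = 1)
    (hF : ∀ i x, 0 ≤ F i x) (hF1 : ∀ i x, F i x ≤ 1) (hG1 : ∀ x, G x ≤ 1)
    (hG0 : G 0 ≤ ∏ i, F i 0) (σ : ι → ι)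
    (hG : ∀ x, 0 ≤ x → G x ≤ ∑ k, F k x * F (σ k) (x / θ (σ k))) :
    ∀ᶠ x in 𝓝[≥] 0, G x ≤ ∑ i, θ i * F i x := by
  by_cases hone : ∀ i, F i 0 = 1
  · refine eventually_nhdsWithin_of_forall fun x (hx : 0 ≤ x) => ?_
    calc G x ≤ ∑ i, θ i * F i 0 := by simpa [hone, hθsum] using hG1 x
      _ ≤ ∑ i, θ i * F i x :=
          sum_le_sum fun i _ => mul_le_mul_of_nonneg_left ((F i).mono hx) (hθ i).le
  by_cases hzero : ∀ i, F i 0 = 0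
  · exact eventually_le_sum_mul_of_eq_zero F G hθ hF hzero σ hG
  push Not at hone hzero
  exact eventually_le_sum_mul_of_lt F G (fun i => (hθ i).le) <|
    hG0.trans_lt (prod_lt_sum_mul hθ hθsum (fun i => hF i 0) (fun i => hF1 i 0) hzero hone)

end StieltjesFunction

section Probability

variable {Ω ι : Type*} [MeasurableSpace Ω] {P : Measure Ω} [IsProbabilityMeasure P] [Fintype ι]

theorem cdf_map_eq_measureReal {Y : Ω → ℝ} (hY : Measurable Y) (x : ℝ) :
    cdf (P.map Y) x = P.real {ω | Y ω ≤ x} := by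
  have := Measure.isProbabilityMeasure_map (μ := P) hY.aemeasurable
  rw [cdf_eq_real, map_measureReal_apply hY measurableSet_Iic]
  rfl

theorem measure_gt_eq_ofReal_one_sub_cdf {Y : Ω → ℝ} (hY : Measurable Y) (x : ℝ) :
    P {ω | Y ω > x} = ENNReal.ofReal (1 - cdf (P.map Y) x) := by
  have hcompl : {ω | Y ω > x} = {ω | Y ω ≤ x}ᶜ := by ext ω; simp
  rw [hcompl, prob_compl_eq_one_sub (measurableSet_le hY measurable_const), ENNReal.ofReal_sub _ (cdf_nonneg _ _),
    ENNReal.ofReal_one, cdf_map_eq_measureReal hY, ofReal_measureReal]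

theorem sum_ofReal_mul_measure_gt_le {θ : ι → ℝ} (hθ : ∀ i, 0 ≤ θ i) (hθsum : ∑ i, θ i = 1)
    {X : ι → Ω → ℝ} (hX : ∀ i, Measurable (X i)) {Y : Ω → ℝ} (hY : Measurable Y) {x : ℝ}
    (hcdf : cdf (P.map Y) x ≤ ∑ i, θ i * cdf (P.map (X i)) x) :
    ∑ i, ENNReal.ofReal (θ i) * P {ω | X i ω > x} ≤ P {ω | Y ω > x} := by
  have hnonneg : ∀ i, 0 ≤ θ i * (1 - cdf (P.map (X i)) x) := fun i =>
    mul_nonneg (hθ i) (sub_nonneg.2 (cdf_le_one _ x))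
  simp only [measure_gt_eq_ofReal_one_sub_cdf (hX _), measure_gt_eq_ofReal_one_sub_cdf hY,
    ← ENNReal.ofReal_mul (hθ _), ← ENNReal.ofReal_sum_of_nonneg fun i _ => hnonneg i]
  refine ENNReal.ofReal_le_ofReal ?_
  simp only [mul_sub, mul_one, sum_sub_distrib, hθsum]
  linarith

variable {θ : ι → ℝ} {X : ι → Ω → ℝ}

theorem measureReal_sum_mul_le_le_prod (hθ : ∀ i, 0 < θ i) (hXnonneg : ∀ i ω, 0 ≤ X i ω) (hindep : iIndepFun X P) (x : ℝ) :
    P.real {ω | ∑ i, θ i * X i ω ≤ x} ≤ ∏ i, P.real {ω | X i ω ≤ x / θ i} := by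
  calc P.real {ω | ∑ i, θ i * X i ω ≤ x} ≤ P.real (⋂ i, {ω | X i ω ≤ x / θ i}) :=
        measureReal_mono fun ω hω => Set.mem_iInter.2 fun j =>
          le_div_of_sum_mul_le hθ (fun i => hXnonneg i ω) hω j
    _ = ∏ i, P.real {ω | X i ω ≤ x / θ i} := by
        rw [measureReal_def, hindep.meas_iInter (s := fun i => {ω | X i ω ≤ x / θ i})
          fun i => ⟨Set.Iic _, measurableSet_Iic, rfl⟩, ENNReal.toReal_prod]
        rfl

theorem measureReal_sum_mul_le_le_sum (hθ : ∀ i, 0 < θ i) (hθsum : ∑ i, θ i = 1)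
    (hXnonneg : ∀ i ω, 0 ≤ X i ω) (hindep : iIndepFun X P)
    {σ : ι → ι} (hσ : ∀ k, σ k ≠ k) (x : ℝ) :
    P.real {ω | ∑ i, θ i * X i ω ≤ x} ≤
      ∑ k, P.real {ω | X k ω ≤ x} * P.real {ω | X (σ k) ω ≤ x / θ (σ k)} := by
  calc P.real {ω | ∑ i, θ i * X i ω ≤ x}
      ≤ P.real (⋃ k, {ω | X k ω ≤ x} ∩ {ω | X (σ k) ω ≤ x / θ (σ k)}) :=
        measureReal_mono fun ω hω =>
          have ⟨k, hk⟩ := exists_le_of_sum_mul_le hθ hθsum hω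
          Set.mem_iUnion.2 ⟨k, hk, le_div_of_sum_mul_le hθ (fun i => hXnonneg i ω) hω (σ k)⟩
    _ ≤ ∑ k, P.real ({ω | X k ω ≤ x} ∩ {ω | X (σ k) ω ≤ x / θ (σ k)}) :=
        measureReal_iUnion_fintype_le _
    _ = ∑ k, P.real {ω | X k ω ≤ x} * P.real {ω | X (σ k) ω ≤ x / θ (σ k)} := by
        refine sum_congr rfl fun k _ => ?_
        simp only [measureReal_def, ← ENNReal.toReal_mul]
        congr 1
        exact (hindep.indepFun (hσ k).symm).measure_inter_preimage_eq_mul _ _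
          measurableSet_Iic measurableSet_Iic

end Probability

/-- local one-basket: the survival function of the Categorical(θ)
mixture (which equals `Σ_i θ_i P(X_i > x)`) is bounded above by that of the weighted
average on a non-trivial interval `[0, t)` near the origin. -/
theorem local_one_basket
    {Ω : Type*} [MeasurableSpace Ω] (P : Measure Ω) [IsProbabilityMeasure P]
    (n : ℕ) (hn : 2 ≤ n)
    (X : Fin n → Ω → ℝ) (hXmeas : ∀ i, Measurable (X i)) (hXpos : ∀ i ω, 0 ≤ X i ω)
    (hIndep : iIndepFun X P)
    (θ : Fin n → ℝ) (hθ : ∀ i, θ i ∈ Set.Ioo (0 : ℝ) 1) (hθsum : ∑ i, θ i = 1) :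
    ∃ t : ℝ, 0 < t ∧ ∀ x : ℝ, 0 ≤ x → x < t →
      ∑ i, ENNReal.ofReal (θ i) * P {ω | X i ω > x} ≤
        P {ω | ∑ i, θ i * X i ω > x} := by
  have : Nontrivial (Fin n) := Fin.nontrivial_iff_two_le.2 hn
  have hθpos : ∀ i, 0 < θ i := fun i => (hθ i).1
  have hS : Measurable fun ω => ∑ i, θ i * X i ω :=
    Finset.measurable_sum _ fun i _ => (hXmeas i).const_mul (θ i)
  choose σ hσ using fun k : Fin n => exists_ne k
  have key := StieltjesFunction.eventually_le_sum_mul (fun i => cdf (P.map (X i)))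
    (cdf (P.map fun ω => ∑ i, θ i * X i ω)) hθpos hθsum (fun i => cdf_nonneg _)
    (fun i => cdf_le_one _) (cdf_le_one _)
    (by simpa only [cdf_map_eq_measureReal hS, cdf_map_eq_measureReal (hXmeas _), zero_div] using
      measureReal_sum_mul_le_le_prod hθpos hXpos hIndep 0) σ
    (fun x _ => by simpa only [cdf_map_eq_measureReal hS, cdf_map_eq_measureReal (hXmeas _)] using
      measureReal_sum_mul_le_le_sum hθpos hθsum hXpos hIndep hσ x)
  obtain ⟨t, ht, hsub⟩ := mem_nhdsGE_iff_exists_Ico_subset.1 key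
  exact ⟨t, ht, fun x hx hxt =>
    sum_ofReal_mul_measure_gt_le (fun i => (hθpos i).le) hθsum hXmeas hS (hsub ⟨hx, hxt⟩)⟩
end

section
/- Let Ω be a set, let X_1, …, X_n be real-valued functions on Ω, let S be a nonempty subset of {1,…,n}, and for each nonempty μ ⊆ S and u ∈ ℝ define A_μ(u) := ∩_{i∈μ} {ω ∈ Ω : X_i(ω) > u}. Let u = (u_λ : ∅ ⊂ λ ⊆ S) be a family of real thresholds satisfying u_μ ≥ u_λ whenever ∅ ⊂ μ ⊂ λ ⊆ S, and for each μ ⊆ S define B_μ(u) := A_μ(u_μ) ∩ ∩_{μ ⊂ λ ⊆ S} (Ω \ A_λ(u_λ)), with the convention A_∅(·) = Ω. Then the collection { B_μ(u) : μ ⊆ S } is a partition of Ω, i.e., the sets B_μ(u) are pairwise disjoint and their union is Ω. -/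
/-- `Aev X μ t` is the event that all variables with indices in `μ` exceed the
threshold `t`.  In particular `Aev X ∅ t = univ`. -/
def Aev {Ω : Type*} {n : ℕ} (X : Fin n → Ω → ℝ) (μ : Finset (Fin n)) (t : ℝ) :
    Set Ω :=
  {ω | ∀ i ∈ μ, X i ω > t}

/-- `Bev X S u μ` is the event that all variables indexed by `μ` exceed `u μ`,
while no strict superset `λ` of `μ` within `S` has all its variables exceeding
`u λ`. -/
def Bev {Ω : Type*} {n : ℕ} (X : Fin n → Ω → ℝ) (S : Finset (Fin n))
    (u : Finset (Fin n) → ℝ) (μ : Finset (Fin n)) : Set Ω :=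
  Aev X μ (u μ) ∩ ⋂ (l : Finset (Fin n)) (_ : μ ⊂ l) (_ : l ⊆ S), (Aev X l (u l))ᶜ

/-- if the thresholds are antitone along strict inclusions of
nonempty subsets of `S`, the events `Bev X S u μ`, `μ ⊆ S`, form a partition of the
sample space: they are pairwise disjoint and their union is everything. -/
theorem Bev_partition
    {Ω : Type*} {n : ℕ} (X : Fin n → Ω → ℝ)
    (S : Finset (Fin n)) (hS : S.Nonempty)
    (u : Finset (Fin n) → ℝ)
    (hu : ∀ μ l : Finset (Fin n), μ.Nonempty → μ ⊂ l → l ⊆ S → u l ≤ u μ) :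
    (∀ μ₁ μ₂ : Finset (Fin n), μ₁ ⊆ S → μ₂ ⊆ S → μ₁ ≠ μ₂ →
        Disjoint (Bev X S u μ₁) (Bev X S u μ₂)) ∧
      (⋃ (μ : Finset (Fin n)) (_ : μ ⊆ S), Bev X S u μ) = Set.univ := by
  classical
  constructor
  · intro μ₁ μ₂ h₁ h₂ hne
    rw [Set.disjoint_left]
    rintro ω ⟨hA₁, hB₁⟩ ⟨hA₂, hB₂⟩
    simp only [Set.mem_iInter, Set.mem_compl_iff] at hB₁ hB₂
    by_cases h12 : μ₁ ⊆ μ₂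
    · exact hB₁ μ₂ (lt_of_le_of_ne h12 hne) h₂ hA₂
    by_cases h21 : μ₂ ⊆ μ₁
    · exact hB₂ μ₁ (lt_of_le_of_ne h21 (Ne.symm hne)) h₁ hA₁
    have hn1 : μ₁.Nonempty := by
      rcases μ₁.eq_empty_or_nonempty with h | h
      · exact absurd (h ▸ Finset.empty_subset μ₂) h12
      · exact h
    have hn2 : μ₂.Nonempty := by
      rcases μ₂.eq_empty_or_nonempty with h | h
      · exact absurd (h ▸ Finset.empty_subset μ₁) h21
      · exact h
    have hl1 : μ₁ ⊂ μ₁ ∪ μ₂ :=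
      lt_of_le_of_ne Finset.subset_union_left
        (fun h => h21 (h ▸ Finset.subset_union_right))
    have hl2 : μ₂ ⊂ μ₁ ∪ μ₂ :=
      lt_of_le_of_ne Finset.subset_union_right
        (fun h => h12 (h ▸ Finset.subset_union_left))
    have hls : μ₁ ∪ μ₂ ⊆ S := Finset.union_subset h₁ h₂
    refine hB₁ (μ₁ ∪ μ₂) hl1 hls ?_
    intro i hi
    rcases Finset.mem_union.mp hi with h | h
    · exact lt_of_le_of_lt (hu μ₁ (μ₁ ∪ μ₂) hn1 hl1 hls) (hA₁ i h)
    · exact lt_of_le_of_lt (hu μ₂ (μ₁ ∪ μ₂) hn2 hl2 hls) (hA₂ i h)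
  · ext ω
    simp only [Set.mem_iUnion, Set.mem_univ, iff_true]
    set M : Finset (Finset (Fin n)) :=
      S.powerset.filter (fun m => ∀ i ∈ m, X i ω > u m) with hM
    have hMne : M.Nonempty := ⟨∅, by simp [hM]⟩
    obtain ⟨μ, hμM, hmax⟩ := M.exists_max_image Finset.card hMne
    have hμ := Finset.mem_filter.mp hμM
    have hμS : μ ⊆ S := Finset.mem_powerset.mp hμ.1
    refine ⟨μ, hμS, hμ.2, ?_⟩
    simp only [Set.mem_iInter, Set.mem_compl_iff]
    intro l hl hlS hAl
    have : l ∈ M := Finset.mem_filter.mpr ⟨Finset.mem_powerset.mpr hlS, hAl⟩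
    exact absurd (hmax l this) (not_le.mpr (Finset.card_lt_card hl))
end
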